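/- arXiv:2502.03536 — 7 statements merged into one kernel-verified Lean document; each statement's English description precedes it below -/
import Mathlib

section
/- Let ρ be a d-dimensional density matrix, let {q_s, |s⟩} be a complex projective 3-design, and let X be a Hermitian d×d matrix satisfying Tr(ρX) = 0. Define M^{-1}(X) = (d+1)X − Tr(X)·𝟙. Then Σ_s q_s d ⟨s|ρ|s⟩ ⟨s|M^{-1}(X)|s⟩² = (d+1)/(d+2) · ( Tr(X²) + Tr(ρ{X,X}) ) − Tr(X)²/(d+2), where {X,X} = 2X². -/
open Matrix ComplexOrder

private lemma sum_ite_push {α : Type*} [Fintype α] (P : Prop) [Decidable P] (f : α → ℂ) :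
    ∑ x : α, (if P then f x else 0) = if P then ∑ x, f x else 0 := by
  split <;> simp

private lemma ite3 (P Q R : Prop) [Decidable P] [Decidable Q] [Decidable R] :
    (if P ∧ Q ∧ R then (1:ℂ) else 0)
      = (if P then (1:ℂ) else 0) * ((if Q then (1:ℂ) else 0) * (if R then (1:ℂ) else 0)) := by
  by_cases hP : P <;> by_cases hQ : Q <;> by_cases hR : R <;> simp [hP, hQ, hR]

private lemma swap23 {d : ℕ} (f : Fin d → Fin d → Fin d → ℂ) :
    (∑ x, ∑ y, ∑ z, f x y z) = ∑ x, ∑ z, ∑ y, f x y z :=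
  Finset.sum_congr rfl fun _ _ => Finset.sum_comm

private lemma rot3 {d : ℕ} (f : Fin d → Fin d → Fin d → ℂ) :
    (∑ x, ∑ y, ∑ z, f x y z) = ∑ z, ∑ x, ∑ y, f x y z := by
  rw [Finset.sum_congr rfl fun x _ => Finset.sum_comm]
  rw [Finset.sum_comm]
section
variable {d : ℕ} (P B C : Matrix (Fin d) (Fin d) ℂ)

private lemma del1 : ∑ a : Fin d × Fin d × Fin d, ∑ b : Fin d × Fin d × Fin d,
    (P b.1 a.1 * (B b.2.1 a.2.1 * C b.2.2 a.2.2)) *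
      (if a.1 = b.1 ∧ a.2.1 = b.2.1 ∧ a.2.2 = b.2.2 then (1:ℂ) else 0)
    = P.trace * (B.trace * C.trace) := by
  simp only [Fintype.sum_prod_type, ite3, mul_ite, ite_mul, mul_one, mul_zero, zero_mul, one_mul,
    sum_ite_push, Finset.sum_ite_eq, Finset.sum_ite_eq', Matrix.trace, Matrix.diag,
    Matrix.mul_apply, Finset.mul_sum, Finset.sum_mul, Finset.mem_univ, if_true]
  rw [rot3, swap23]

private lemma del2 : ∑ a : Fin d × Fin d × Fin d, ∑ b : Fin d × Fin d × Fin d,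
    (P b.1 a.1 * (B b.2.1 a.2.1 * C b.2.2 a.2.2)) *
      (if a.1 = b.1 ∧ a.2.1 = b.2.2 ∧ a.2.2 = b.2.1 then (1:ℂ) else 0)
    = P.trace * (B * C).trace := by
  simp only [Fintype.sum_prod_type, ite3, mul_ite, ite_mul, mul_one, mul_zero, zero_mul, one_mul,
    sum_ite_push, Finset.sum_ite_eq, Finset.sum_ite_eq', Matrix.trace, Matrix.diag,
    Matrix.mul_apply, Finset.mul_sum, Finset.sum_mul, Finset.mem_univ, if_true]
  rw [rot3, swap23]

private lemma del3 : ∑ a : Fin d × Fin d × Fin d, ∑ b : Fin d × Fin d × Fin d,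
    (P b.1 a.1 * (B b.2.1 a.2.1 * C b.2.2 a.2.2)) *
      (if a.1 = b.2.1 ∧ a.2.1 = b.1 ∧ a.2.2 = b.2.2 then (1:ℂ) else 0)
    = (P * B).trace * C.trace := by
  simp only [Fintype.sum_prod_type, ite3, mul_ite, ite_mul, mul_one, mul_zero, zero_mul, one_mul,
    sum_ite_push, Finset.sum_ite_eq, Finset.sum_ite_eq', Matrix.trace, Matrix.diag,
    Matrix.mul_apply, Finset.mul_sum, Finset.sum_mul, Finset.mem_univ, if_true]
  rw [rot3, swap23]
  refine Finset.sum_congr rfl fun _ _ => Finset.sum_congr rfl fun _ _ =>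
    Finset.sum_congr rfl fun _ _ => by ring

private lemma del4 : ∑ a : Fin d × Fin d × Fin d, ∑ b : Fin d × Fin d × Fin d,
    (P b.1 a.1 * (B b.2.1 a.2.1 * C b.2.2 a.2.2)) *
      (if a.1 = b.2.1 ∧ a.2.1 = b.2.2 ∧ a.2.2 = b.1 then (1:ℂ) else 0)
    = (P * B * C).trace := by
  simp only [Fintype.sum_prod_type, ite3, mul_ite, ite_mul, mul_one, mul_zero, zero_mul, one_mul,
    sum_ite_push, Finset.sum_ite_eq, Finset.sum_ite_eq', Matrix.trace, Matrix.diag,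
    Matrix.mul_apply, Finset.mul_sum, Finset.sum_mul, Finset.mem_univ, if_true]
  rw [rot3, swap23]
  refine Finset.sum_congr rfl fun _ _ => Finset.sum_congr rfl fun _ _ =>
    Finset.sum_congr rfl fun _ _ => by ring

private lemma del5 : ∑ a : Fin d × Fin d × Fin d, ∑ b : Fin d × Fin d × Fin d,
    (P b.1 a.1 * (B b.2.1 a.2.1 * C b.2.2 a.2.2)) *
      (if a.1 = b.2.2 ∧ a.2.1 = b.1 ∧ a.2.2 = b.2.1 then (1:ℂ) else 0)
    = (P * C * B).trace := by
  simp only [Fintype.sum_prod_type, ite3, mul_ite, ite_mul, mul_one, mul_zero, zero_mul, one_mul,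
    sum_ite_push, Finset.sum_ite_eq, Finset.sum_ite_eq', Matrix.trace, Matrix.diag,
    Matrix.mul_apply, Finset.mul_sum, Finset.sum_mul, Finset.mem_univ, if_true]
  rw [rot3, rot3]
  refine Finset.sum_congr rfl fun _ _ => Finset.sum_congr rfl fun _ _ =>
    Finset.sum_congr rfl fun _ _ => by ring

private lemma del6 : ∑ a : Fin d × Fin d × Fin d, ∑ b : Fin d × Fin d × Fin d,
    (P b.1 a.1 * (B b.2.1 a.2.1 * C b.2.2 a.2.2)) *
      (if a.1 = b.2.2 ∧ a.2.1 = b.2.1 ∧ a.2.2 = b.1 then (1:ℂ) else 0)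
    = (P * C).trace * B.trace := by
  simp only [Fintype.sum_prod_type, ite3, mul_ite, ite_mul, mul_one, mul_zero, zero_mul, one_mul,
    sum_ite_push, Finset.sum_ite_eq, Finset.sum_ite_eq', Matrix.trace, Matrix.diag,
    Matrix.mul_apply, Finset.mul_sum, Finset.sum_mul, Finset.mem_univ, if_true]
  rw [rot3, rot3]
  refine Finset.sum_congr rfl fun _ _ => Finset.sum_congr rfl fun _ _ =>
    Finset.sum_congr rfl fun _ _ => by ring
end
private lemma prod3sum {α : Type*} [Fintype α] (φ1 φ2 φ3 : α → ℂ) :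
    ∑ x : α × α × α, φ1 x.1 * (φ2 x.2.1 * φ3 x.2.2)
      = (∑ a, φ1 a) * ((∑ a, φ2 a) * (∑ a, φ3 a)) := by
  rw [Fintype.sum_prod_type]
  simp_rw [← Finset.mul_sum]
  rw [← Finset.sum_mul]
  congr 1
  rw [Fintype.sum_prod_type]
  simp_rw [← Finset.mul_sum]
  rw [← Finset.sum_mul]

private lemma swap2 {d : ℕ} (f : Fin d → Fin d → ℂ) :
    ∑ p : Fin d × Fin d, f p.1 p.2 = ∑ p : Fin d × Fin d, f p.2 p.1 := by
  rw [Fintype.sum_prod_type, Fintype.sum_prod_type]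
  exact Finset.sum_comm

private def e3 (d : ℕ) : ((Fin d × Fin d) × (Fin d × Fin d) × (Fin d × Fin d)) ≃
    ((Fin d × Fin d × Fin d) × (Fin d × Fin d × Fin d)) where
  toFun x := ((x.1.1, x.2.1.1, x.2.2.1), (x.1.2, x.2.1.2, x.2.2.2))
  invFun y := ((y.1.1, y.2.1), ((y.1.2.1, y.2.2.1), (y.1.2.2, y.2.2.2)))
  left_inv x := rfl
  right_inv y := rfl

private lemma bigfact {d : ℕ} (F G H : Fin d → Fin d → ℂ) :
    (∑ a : Fin d × Fin d × Fin d, ∑ b : Fin d × Fin d × Fin d,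
      F b.1 a.1 * (G b.2.1 a.2.1 * H b.2.2 a.2.2))
    = (∑ p : Fin d × Fin d, F p.1 p.2) *
        ((∑ p : Fin d × Fin d, G p.1 p.2) * (∑ p : Fin d × Fin d, H p.1 p.2)) := by
  calc (∑ a : Fin d × Fin d × Fin d, ∑ b : Fin d × Fin d × Fin d,
      F b.1 a.1 * (G b.2.1 a.2.1 * H b.2.2 a.2.2))
      = ∑ p : (Fin d × Fin d × Fin d) × (Fin d × Fin d × Fin d),
          F p.2.1 p.1.1 * (G p.2.2.1 p.1.2.1 * H p.2.2.2 p.1.2.2) :=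
        (Fintype.sum_prod_type (f := fun p : (Fin d × Fin d × Fin d) × (Fin d × Fin d × Fin d) =>
          F p.2.1 p.1.1 * (G p.2.2.1 p.1.2.1 * H p.2.2.2 p.1.2.2))).symm
    _ = ∑ x : (Fin d × Fin d) × (Fin d × Fin d) × (Fin d × Fin d),
          (fun pr : Fin d × Fin d => F pr.2 pr.1) x.1 *
            ((fun pr : Fin d × Fin d => G pr.2 pr.1) x.2.1 *
             (fun pr : Fin d × Fin d => H pr.2 pr.1) x.2.2) :=
        (Fintype.sum_equiv (e3 d) _ _ fun x => rfl).symm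
    _ = (∑ pr : Fin d × Fin d, F pr.2 pr.1) *
          ((∑ pr : Fin d × Fin d, G pr.2 pr.1) * (∑ pr : Fin d × Fin d, H pr.2 pr.1)) :=
        prod3sum (fun pr : Fin d × Fin d => F pr.2 pr.1) (fun pr : Fin d × Fin d => G pr.2 pr.1)
          (fun pr : Fin d × Fin d => H pr.2 pr.1)
    _ = _ := by rw [← swap2 F, ← swap2 G, ← swap2 H]

/-- For a `d`-dimensional density matrix `ρ`, a complex projective 3-design
`{q_s, |s⟩}` (also satisfying `Σ_s q_s |s⟩⟨s| = 𝟙/d`), and a Hermitian `X` with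
`Tr(ρX) = 0`, letting `M⁻¹(X) = (d+1)X − Tr(X)𝟙`,
`Σ_s q_s d ⟨s|ρ|s⟩ ⟨s|M⁻¹(X)|s⟩²
  = (d+1)/(d+2)·(Tr(X²) + Tr(ρ{X,X})) − Tr(X)²/(d+2)`. -/
theorem stmt4 {d : ℕ} (hd : 0 < d) {ι : Type*} [Fintype ι]
    (q : ι → ℝ) (ψ : ι → Fin d → ℂ)
    (hq : ∀ s, 0 < q s) (hsum : ∑ s, q s = 1)
    (hunit : ∀ s, star (ψ s) ⬝ᵥ ψ s = 1)
    (hdesign : ∑ s, (q s : ℂ) •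
        Matrix.of (fun (i j : Fin d × Fin d × Fin d) =>
          ψ s i.1 * ψ s i.2.1 * ψ s i.2.2 *
          star (ψ s j.1) * star (ψ s j.2.1) * star (ψ s j.2.2)) =
      ((d : ℂ) * ((d : ℂ) + 1) * ((d : ℂ) + 2))⁻¹ •
        Matrix.of (fun (i j : Fin d × Fin d × Fin d) =>
          (if i.1 = j.1 ∧ i.2.1 = j.2.1 ∧ i.2.2 = j.2.2 then (1:ℂ) else 0) +
          (if i.1 = j.1 ∧ i.2.1 = j.2.2 ∧ i.2.2 = j.2.1 then (1:ℂ) else 0) +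
          (if i.1 = j.2.1 ∧ i.2.1 = j.1 ∧ i.2.2 = j.2.2 then (1:ℂ) else 0) +
          (if i.1 = j.2.1 ∧ i.2.1 = j.2.2 ∧ i.2.2 = j.1 then (1:ℂ) else 0) +
          (if i.1 = j.2.2 ∧ i.2.1 = j.1 ∧ i.2.2 = j.2.1 then (1:ℂ) else 0) +
          (if i.1 = j.2.2 ∧ i.2.1 = j.2.1 ∧ i.2.2 = j.1 then (1:ℂ) else 0)))
    (hres : ∑ s, (q s : ℂ) • vecMulVec (ψ s) (star (ψ s)) =
      ((d : ℂ))⁻¹ • (1 : Matrix (Fin d) (Fin d) ℂ))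
    (ρ : Matrix (Fin d) (Fin d) ℂ) (hρ : ρ.PosSemidef) (hρtr : ρ.trace = 1)
    (X : Matrix (Fin d) (Fin d) ℂ) (hX : X.IsHermitian)
    (hX0 : (ρ * X).trace = 0)
    (Minv : Matrix (Fin d) (Fin d) ℂ)
    (hMinv : Minv = ((d : ℂ) + 1) • X - X.trace • (1 : Matrix (Fin d) (Fin d) ℂ)) :
    ∑ s, (q s : ℂ) * (d : ℂ) * (star (ψ s) ⬝ᵥ (ρ *ᵥ ψ s)) *
        (star (ψ s) ⬝ᵥ (Minv *ᵥ ψ s)) ^ 2 =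
      (((d : ℂ) + 1) / ((d : ℂ) + 2)) *
        ((X * X).trace + (ρ * (X * X + X * X)).trace) -
      X.trace ^ 2 / ((d : ℂ) + 2) := by
  classical
  have hd0 : (d:ℂ) ≠ 0 := Nat.cast_ne_zero.mpr hd.ne'
  have hd1 : (d:ℂ) + 1 ≠ 0 := by
    have h : ((d:ℂ) + 1) = ((d+1 : ℕ) : ℂ) := by push_cast; ring
    rw [h]; exact_mod_cast Nat.succ_ne_zero d
  have hd2 : (d:ℂ) + 2 ≠ 0 := by
    have h : ((d:ℂ) + 2) = ((d+2 : ℕ) : ℂ) := by push_cast; ring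
    rw [h]; exact_mod_cast Nat.succ_ne_zero (d+1)
  have hdot : ∀ (s : ι) (M : Matrix (Fin d) (Fin d) ℂ),
      (∑ p : Fin d × Fin d, star (ψ s p.1) * (M p.1 p.2 * ψ s p.2))
        = star (ψ s) ⬝ᵥ M *ᵥ ψ s := by
    intro s M
    rw [Fintype.sum_prod_type]
    simp [dotProduct, mulVec, Finset.mul_sum, mul_assoc]
  have main := congrArg (fun M : Matrix (Fin d × Fin d × Fin d) (Fin d × Fin d × Fin d) ℂ =>
    ∑ a : Fin d × Fin d × Fin d, ∑ b : Fin d × Fin d × Fin d,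
      (ρ b.1 a.1 * (Minv b.2.1 a.2.1 * Minv b.2.2 a.2.2)) * M a b) hdesign
  have hL : (∑ a : Fin d × Fin d × Fin d, ∑ b : Fin d × Fin d × Fin d,
      (ρ b.1 a.1 * (Minv b.2.1 a.2.1 * Minv b.2.2 a.2.2)) *
        (∑ s, (q s : ℂ) • Matrix.of (fun (i j : Fin d × Fin d × Fin d) =>
          ψ s i.1 * ψ s i.2.1 * ψ s i.2.2 *
          star (ψ s j.1) * star (ψ s j.2.1) * star (ψ s j.2.2))) a b)
      = ∑ s, (q s : ℂ) * ((star (ψ s) ⬝ᵥ ρ *ᵥ ψ s) *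
          ((star (ψ s) ⬝ᵥ Minv *ᵥ ψ s) * (star (ψ s) ⬝ᵥ Minv *ᵥ ψ s))) := by
    simp only [Matrix.sum_apply, Matrix.smul_apply, Matrix.of_apply, smul_eq_mul,
      Finset.mul_sum]
    rw [Finset.sum_congr rfl fun a _ => Finset.sum_comm]
    rw [Finset.sum_comm]
    refine Finset.sum_congr rfl fun s _ => ?_
    trans (∑ a : Fin d × Fin d × Fin d, ∑ b : Fin d × Fin d × Fin d, (q s : ℂ) *
        ((star (ψ s b.1) * (ρ b.1 a.1 * ψ s a.1)) *
         ((star (ψ s b.2.1) * (Minv b.2.1 a.2.1 * ψ s a.2.1)) *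
          (star (ψ s b.2.2) * (Minv b.2.2 a.2.2 * ψ s a.2.2)))))
    · exact Finset.sum_congr rfl fun a _ => Finset.sum_congr rfl fun b _ => by ring
    · simp_rw [← Finset.mul_sum]
      rw [bigfact (fun i j => star (ψ s i) * (ρ i j * ψ s j))
          (fun i j => star (ψ s i) * (Minv i j * ψ s j))
          (fun i j => star (ψ s i) * (Minv i j * ψ s j))]
      rw [hdot s ρ, hdot s Minv]
  have hR : (∑ a : Fin d × Fin d × Fin d, ∑ b : Fin d × Fin d × Fin d,
      (ρ b.1 a.1 * (Minv b.2.1 a.2.1 * Minv b.2.2 a.2.2)) *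
        (((d : ℂ) * ((d : ℂ) + 1) * ((d : ℂ) + 2))⁻¹ •
          Matrix.of (fun (i j : Fin d × Fin d × Fin d) =>
            (if i.1 = j.1 ∧ i.2.1 = j.2.1 ∧ i.2.2 = j.2.2 then (1:ℂ) else 0) +
            (if i.1 = j.1 ∧ i.2.1 = j.2.2 ∧ i.2.2 = j.2.1 then (1:ℂ) else 0) +
            (if i.1 = j.2.1 ∧ i.2.1 = j.1 ∧ i.2.2 = j.2.2 then (1:ℂ) else 0) +
            (if i.1 = j.2.1 ∧ i.2.1 = j.2.2 ∧ i.2.2 = j.1 then (1:ℂ) else 0) +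
            (if i.1 = j.2.2 ∧ i.2.1 = j.1 ∧ i.2.2 = j.2.1 then (1:ℂ) else 0) +
            (if i.1 = j.2.2 ∧ i.2.1 = j.2.1 ∧ i.2.2 = j.1 then (1:ℂ) else 0))) a b)
      = ((d : ℂ) * ((d : ℂ) + 1) * ((d : ℂ) + 2))⁻¹ *
          (ρ.trace * (Minv.trace * Minv.trace) + (ρ.trace * (Minv * Minv).trace +
           ((ρ * Minv).trace * Minv.trace + ((ρ * Minv * Minv).trace +
            ((ρ * Minv * Minv).trace + (ρ * Minv).trace * Minv.trace))))) := by
    simp only [Matrix.smul_apply, Matrix.of_apply, smul_eq_mul]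
    trans (∑ a : Fin d × Fin d × Fin d, ∑ b : Fin d × Fin d × Fin d,
      ((d : ℂ) * ((d : ℂ) + 1) * ((d : ℂ) + 2))⁻¹ *
        (((ρ b.1 a.1 * (Minv b.2.1 a.2.1 * Minv b.2.2 a.2.2)) *
            (if a.1 = b.1 ∧ a.2.1 = b.2.1 ∧ a.2.2 = b.2.2 then (1:ℂ) else 0) +
         (((ρ b.1 a.1 * (Minv b.2.1 a.2.1 * Minv b.2.2 a.2.2)) *
            (if a.1 = b.1 ∧ a.2.1 = b.2.2 ∧ a.2.2 = b.2.1 then (1:ℂ) else 0)) +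
         (((ρ b.1 a.1 * (Minv b.2.1 a.2.1 * Minv b.2.2 a.2.2)) *
            (if a.1 = b.2.1 ∧ a.2.1 = b.1 ∧ a.2.2 = b.2.2 then (1:ℂ) else 0)) +
         (((ρ b.1 a.1 * (Minv b.2.1 a.2.1 * Minv b.2.2 a.2.2)) *
            (if a.1 = b.2.1 ∧ a.2.1 = b.2.2 ∧ a.2.2 = b.1 then (1:ℂ) else 0)) +
         (((ρ b.1 a.1 * (Minv b.2.1 a.2.1 * Minv b.2.2 a.2.2)) *
            (if a.1 = b.2.2 ∧ a.2.1 = b.1 ∧ a.2.2 = b.2.1 then (1:ℂ) else 0)) +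
          ((ρ b.1 a.1 * (Minv b.2.1 a.2.1 * Minv b.2.2 a.2.2)) *
            (if a.1 = b.2.2 ∧ a.2.1 = b.2.1 ∧ a.2.2 = b.1 then (1:ℂ) else 0)))))))))
    · exact Finset.sum_congr rfl fun a _ => Finset.sum_congr rfl fun b _ => by ring
    · simp_rw [← Finset.mul_sum]
      congr 1
      simp only [Finset.sum_add_distrib]
      rw [del1 ρ Minv Minv, del2 ρ Minv Minv, del3 ρ Minv Minv, del4 ρ Minv Minv,
        del5 ρ Minv Minv, del6 ρ Minv Minv]
  have key := hL.symm.trans (main.trans hR)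
  have tr1 : Minv.trace = X.trace := by
    rw [hMinv]
    simp [Matrix.trace_sub, Matrix.trace_smul, Matrix.trace_one, Fintype.card_fin, smul_eq_mul]
    ring
  have tr2 : (ρ * Minv).trace = -X.trace := by
    rw [hMinv]
    simp [Matrix.mul_sub, Matrix.mul_smul, Matrix.trace_sub, Matrix.trace_smul, smul_eq_mul,
      hX0, hρtr]
  have tr3 : (Minv * Minv).trace
      = ((d:ℂ)+1)^2 * (X*X).trace - ((d:ℂ)+2) * X.trace^2 := by
    rw [hMinv]
    simp [Matrix.sub_mul, Matrix.mul_sub, Matrix.mul_smul, Matrix.smul_mul, Matrix.mul_one,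
      Matrix.one_mul, Matrix.trace_sub, Matrix.trace_smul, Matrix.trace_one, Fintype.card_fin,
      smul_eq_mul, smul_smul]
    ring
  have tr4 : (ρ * Minv * Minv).trace
      = ((d:ℂ)+1)^2 * (ρ * (X * X)).trace + X.trace^2 := by
    rw [hMinv]
    simp [Matrix.mul_sub, Matrix.sub_mul, Matrix.mul_smul, Matrix.smul_mul, Matrix.mul_one,
      Matrix.one_mul, Matrix.trace_sub, Matrix.trace_smul, smul_eq_mul, smul_smul,
      Matrix.mul_assoc, hX0, hρtr]
    ring
  have hRHS : (ρ * (X * X + X * X)).trace = (ρ * (X * X)).trace + (ρ * (X * X)).trace := by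
    rw [Matrix.mul_add, Matrix.trace_add]
  calc ∑ s, (q s : ℂ) * (d : ℂ) * (star (ψ s) ⬝ᵥ (ρ *ᵥ ψ s)) *
        (star (ψ s) ⬝ᵥ (Minv *ᵥ ψ s)) ^ 2
      = (d:ℂ) * ∑ s, (q s : ℂ) * ((star (ψ s) ⬝ᵥ ρ *ᵥ ψ s) *
          ((star (ψ s) ⬝ᵥ Minv *ᵥ ψ s) * (star (ψ s) ⬝ᵥ Minv *ᵥ ψ s))) := by
        rw [Finset.mul_sum]
        exact Finset.sum_congr rfl fun s _ => by ring
    _ = (d:ℂ) * (((d : ℂ) * ((d : ℂ) + 1) * ((d : ℂ) + 2))⁻¹ *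
          (ρ.trace * (Minv.trace * Minv.trace) + (ρ.trace * (Minv * Minv).trace +
           ((ρ * Minv).trace * Minv.trace + ((ρ * Minv * Minv).trace +
            ((ρ * Minv * Minv).trace + (ρ * Minv).trace * Minv.trace)))))) := by
        rw [key]
    _ = _ := by
        rw [tr1, tr2, tr3, tr4, hρtr, hRHS]
        field_simp
        ring
end

section
/- Let ρ be a d-dimensional density matrix with spectral decomposition ρ = Σ_k λ_k |ψ_k⟩⟨ψ_k| having exactly r nonzero eigenvalues, and let κ = (max_k λ_k)/(min_{k:λ_k>0} λ_k). For each parameter direction i, let ∂_i ρ be Hermitian matrices supported appropriately, and define K_{ij} = 4 Σ_{k,l: λ_k+λ_l>0} Re[⟨ψ_k|∂_i ρ|ψ_l⟩⟨ψ_l|∂_j ρ|ψ_k⟩]/(λ_k+λ_l)² and J_{ij} = 2 Σ_{k,l: λ_k+λ_l>0} Re[⟨ψ_k|∂_i ρ|ψ_l⟩⟨ψ_l|∂_j ρ|ψ_k⟩]/(λ_k+λ_l). Then K ⪯ 2rκ J as real symmetric matrices (i.e., 2rκJ − K is positive semidefinite). -/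
/-!
By Hermiticity of `∂_iρ`, the `(k, l)` summand of `K_{ij}` and `J_{ij}` is a weight `w(λ_k + λ_l)`
times `Re[a_i conj a_j]` with `a_i = ⟨ψ_k|∂_iρ|ψ_l⟩`, a positive semidefinite real Gram matrix.
Hence `2rκJ - K` is such a sum with weights `4rκ/s - 4/s²`, which are nonnegative because every
positive `s = λ_k + λ_l` is at least `λ_min`, while `r λ_max ≥ ∑ λ_k = 1`.
-/

open Matrix ComplexOrder

theorem Matrix.IsHermitian.star_dotProduct_mulVec_swap {n α : Type*} [Fintype n] [CommSemiring α]
    [StarRing α] {A : Matrix n n α} (hA : A.IsHermitian) (v w : n → α) :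
    star w ⬝ᵥ (A *ᵥ v) = star (star v ⬝ᵥ (A *ᵥ w)) := by
  rw [← star_dotProduct, star_mulVec, hA.eq, ← dotProduct_mulVec]

theorem Matrix.posSemidef_map_re_vecMulVec_self_star {n : Type*} [Fintype n] (a : n → ℂ) :
    ((vecMulVec a (star a)).map Complex.re).PosSemidef := by
  have hsplit : (vecMulVec a (star a)).map Complex.re =
      vecMulVec (fun i => (a i).re) (star fun i => (a i).re) +
        vecMulVec (fun i => (a i).im) (star fun i => (a i).im) := by
    ext i j
    simp [vecMulVec_apply, Complex.mul_re]
  rw [hsplit]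
  exact (posSemidef_vecMulVec_self_star _).add (posSemidef_vecMulVec_self_star _)

section SpectralGram

variable {ι n p : Type*} [Fintype ι] [Fintype n]

noncomputable def spectralGram (w : ℝ → ℝ) (lam : ι → ℝ) (ψ : ι → n → ℂ)
    (A : p → Matrix n n ℂ) : Matrix p p ℝ :=
  ∑ k, ∑ l, (if 0 < lam k + lam l then w (lam k + lam l) else 0) •
    (vecMulVec (fun i => star (ψ k) ⬝ᵥ (A i *ᵥ ψ l))
      (star fun i => star (ψ k) ⬝ᵥ (A i *ᵥ ψ l))).map Complex.re

theorem spectralGram_apply (w : ℝ → ℝ) (lam : ι → ℝ) (ψ : ι → n → ℂ)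
    {A : p → Matrix n n ℂ} (hA : ∀ i, (A i).IsHermitian) (i j : p) :
    spectralGram w lam ψ A i j = ∑ k, ∑ l, if 0 < lam k + lam l then
      w (lam k + lam l) * ((star (ψ k) ⬝ᵥ (A i *ᵥ ψ l)) * (star (ψ l) ⬝ᵥ (A j *ᵥ ψ k))).re
      else 0 := by
  simp only [spectralGram, Matrix.sum_apply, Matrix.smul_apply, map_apply, vecMulVec_apply,
    Pi.star_apply, ← (hA j).star_dotProduct_mulVec_swap, smul_eq_mul, ite_mul, zero_mul]

theorem spectralGram_sub_smul (c : ℝ) (w₁ w₂ : ℝ → ℝ) (lam : ι → ℝ) (ψ : ι → n → ℂ)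
    (A : p → Matrix n n ℂ) :
    spectralGram (fun s => c * w₁ s - w₂ s) lam ψ A =
      c • spectralGram w₁ lam ψ A - spectralGram w₂ lam ψ A := by
  simp only [spectralGram, Finset.smul_sum, ← Finset.sum_sub_distrib, smul_smul]
  refine Finset.sum_congr rfl fun k _ => Finset.sum_congr rfl fun l _ => ?_
  split_ifs <;> simp [sub_smul]

theorem posSemidef_spectralGram [Fintype p] {w : ℝ → ℝ} {lam : ι → ℝ}
    (hw : ∀ k l, 0 < lam k + lam l → 0 ≤ w (lam k + lam l)) (ψ : ι → n → ℂ)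
    (A : p → Matrix n n ℂ) : (spectralGram w lam ψ A).PosSemidef := by
  refine posSemidef_sum _ fun k _ => posSemidef_sum _ fun l _ => ?_
  split_ifs with hs
  · exact (posSemidef_map_re_vecMulVec_self_star _).smul (hw k l hs)
  · simpa using PosSemidef.zero

end SpectralGram

section Eigenvalues

variable {ι : Type*} {lam : ι → ℝ}

theorem one_le_card_support_mul_of_sum_eq_one [Fintype ι] {M : ℝ} (hsum : ∑ k, lam k = 1)
    (hM : ∀ k, lam k ≤ M) : 1 ≤ (Finset.univ.filter (fun k => lam k ≠ 0)).card * M :=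
  calc (1 : ℝ) = ∑ k ∈ Finset.univ.filter (fun k => lam k ≠ 0), lam k := by
        rw [Finset.sum_filter_ne_zero, hsum]
    _ ≤ _ := by simpa using Finset.sum_le_card_nsmul _ _ _ fun k _ => hM k

theorem le_add_of_forall_ne_zero_le {μ : ℝ} (hnonneg : ∀ k, 0 ≤ lam k)
    (hμ : ∀ k, lam k ≠ 0 → μ ≤ lam k) {k l : ι} (hkl : 0 < lam k + lam l) :
    μ ≤ lam k + lam l := by
  by_cases hk : lam k = 0
  · have hl : lam l ≠ 0 := by intro hl; simp [hk, hl] at hkl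
    linarith [hμ l hl]
  · linarith [hμ k hk, hnonneg l]

end Eigenvalues

theorem stmt6_general {d m r : ℕ} (lam : Fin d → ℝ) (ψk : Fin d → Fin d → ℂ)
    (hlam_nonneg : ∀ k, 0 ≤ lam k) (hlam_sum : ∑ k, lam k = 1)
    (hr : (Finset.univ.filter (fun k => lam k ≠ 0)).card = r)
    (lmax lmin κ : ℝ)
    (hmax : ∀ k, lam k ≤ lmax)
    (hmin : ∀ k, lam k ≠ 0 → lmin ≤ lam k) (hmin' : ∃ k, lam k ≠ 0 ∧ lam k = lmin)
    (hκ : κ = lmax / lmin)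
    (dρ : Fin m → Matrix (Fin d) (Fin d) ℂ)
    (hherm : ∀ i, (dρ i).IsHermitian)
    (K J : Matrix (Fin m) (Fin m) ℝ)
    (hK : ∀ i j, K i j = 4 * ∑ k, ∑ l, if 0 < lam k + lam l then
        ((star (ψk k) ⬝ᵥ (dρ i *ᵥ ψk l)) *
          (star (ψk l) ⬝ᵥ (dρ j *ᵥ ψk k))).re / (lam k + lam l) ^ 2 else 0)
    (hJ : ∀ i j, J i j = 2 * ∑ k, ∑ l, if 0 < lam k + lam l then
        ((star (ψk k) ⬝ᵥ (dρ i *ᵥ ψk l)) *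
          (star (ψk l) ⬝ᵥ (dρ j *ᵥ ψk k))).re / (lam k + lam l) else 0) :
    ((2 * (r : ℝ) * κ) • J - K).PosSemidef := by
  have hK' : K = spectralGram (fun s => 4 / s ^ 2) lam ψk dρ := by
    ext i j
    simp only [hK, spectralGram_apply _ _ _ hherm, Finset.mul_sum, mul_ite, mul_zero,
      div_mul_eq_mul_div, mul_div_assoc']
  have hJ' : J = spectralGram (fun s => 2 / s) lam ψk dρ := by
    ext i j
    simp only [hJ, spectralGram_apply _ _ _ hherm, Finset.mul_sum, mul_ite, mul_zero,
      div_mul_eq_mul_div, mul_div_assoc']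
  rw [hK', hJ', ← spectralGram_sub_smul]
  refine posSemidef_spectralGram (fun k l hs => ?_) ψk dρ
  have hlmin : 0 < lmin := by
    obtain ⟨k, hk, rfl⟩ := hmin'
    exact (hlam_nonneg k).lt_of_ne' hk
  have hrlmax : 1 ≤ r * lmax := hr ▸ one_le_card_support_mul_of_sum_eq_one hlam_sum hmax
  have hs_ge : 1 ≤ (lam k + lam l) / lmin :=
    (one_le_div hlmin).2 (le_add_of_forall_ne_zero_le hlam_nonneg hmin hs)
  have hrκs : 1 ≤ r * κ * (lam k + lam l) :=
    calc (1 : ℝ) ≤ r * lmax * 1 := by simpa using hrlmax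
      _ ≤ r * lmax * ((lam k + lam l) / lmin) := by gcongr
      _ = r * κ * (lam k + lam l) := by rw [hκ]; ring
  calc 0 ≤ 4 / (lam k + lam l) ^ 2 * (r * κ * (lam k + lam l) - 1) :=
        mul_nonneg (by positivity) (sub_nonneg.2 hrκs)
    _ = 2 * r * κ * (2 / (lam k + lam l)) - 4 / (lam k + lam l) ^ 2 := by
        field_simp
        ring

/-- For a density matrix with spectral data `{λ_k, |ψ_k⟩}` having exactly `r`
nonzero eigenvalues and condition number `κ = λ_max/λ_min` (over nonzero
eigenvalues), with Hermitian derivative matrices `∂_iρ`, the matrices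
`K_{ij} = 4Σ_{k,l:λ_k+λ_l>0} Re[⟨ψ_k|∂_iρ|ψ_l⟩⟨ψ_l|∂_jρ|ψ_k⟩]/(λ_k+λ_l)²` and
`J_{ij} = 2Σ_{k,l:λ_k+λ_l>0} Re[⟨ψ_k|∂_iρ|ψ_l⟩⟨ψ_l|∂_jρ|ψ_k⟩]/(λ_k+λ_l)`
satisfy `K ⪯ 2rκJ`. -/
theorem stmt6 {d m r : ℕ} (lam : Fin d → ℝ) (ψk : Fin d → Fin d → ℂ)
    (hlam_nonneg : ∀ k, 0 ≤ lam k) (hlam_sum : ∑ k, lam k = 1)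
    (horth : ∀ k l, star (ψk k) ⬝ᵥ ψk l = if k = l then 1 else 0)
    (hr : (Finset.univ.filter (fun k => lam k ≠ 0)).card = r)
    (lmax lmin κ : ℝ)
    (hmax : ∀ k, lam k ≤ lmax) (hmax' : ∃ k, lam k = lmax)
    (hmin : ∀ k, lam k ≠ 0 → lmin ≤ lam k) (hmin' : ∃ k, lam k ≠ 0 ∧ lam k = lmin)
    (hκ : κ = lmax / lmin)
    (dρ : Fin m → Matrix (Fin d) (Fin d) ℂ)
    (hherm : ∀ i, (dρ i).IsHermitian)
    (K J : Matrix (Fin m) (Fin m) ℝ)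
    (hK : ∀ i j, K i j = 4 * ∑ k, ∑ l, if 0 < lam k + lam l then
        ((star (ψk k) ⬝ᵥ (dρ i *ᵥ ψk l)) *
          (star (ψk l) ⬝ᵥ (dρ j *ᵥ ψk k))).re / (lam k + lam l) ^ 2 else 0)
    (hJ : ∀ i j, J i j = 2 * ∑ k, ∑ l, if 0 < lam k + lam l then
        ((star (ψk k) ⬝ᵥ (dρ i *ᵥ ψk l)) *
          (star (ψk l) ⬝ᵥ (dρ j *ᵥ ψk k))).re / (lam k + lam l) else 0) :
    ((2 * (r : ℝ) * κ) • J - K).PosSemidef :=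
  stmt6_general lam ψk hlam_nonneg hlam_sum hr lmax lmin κ hmax hmin hmin' hκ dρ hherm K J hK hJ
end

section
/- Let ρ be a d-dimensional density matrix with eigenvalues λ_k and eigenvectors |ψ_k⟩, and suppose all eigenvalues in the support of a projector Π (onto eigenstates with λ_k ≥ μ > 0) are at least μ. Define J̃_{ij} = 2 Σ_{(k,l): λ_k≥μ or λ_l≥μ} Re[⟨ψ_k|∂_i ρ|ψ_l⟩⟨ψ_l|∂_j ρ|ψ_k⟩]/(λ_k+λ_l) and K̃_{ij} = 4 Σ_{(k,l): λ_k≥μ or λ_l≥μ} Re[⟨ψ_k|∂_i ρ|ψ_l⟩⟨ψ_l|∂_j ρ|ψ_k⟩]/(λ_k+λ_l)². Then K̃ ⪯ (2/μ) J̃ as real symmetric matrices. -/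
/-!
Write `a_i(k,l) = ⟨ψ_k|∂_iρ|ψ_l⟩` and `s = λ_k + λ_l`. As the eigenvalues are nonnegative, every
pair in the sums has `s ≥ μ`, so the weight `4/(μ s) - 4/s²` is nonnegative. Hermiticity of `∂_iρ`
gives `a_i(l,k) = conj a_i(k,l)`, so `(2/μ) J̃ - K̃` is the nonnegative combination, over the pairs,
of the real parts of the rank-one Gram matrices `a(k,l) a(k,l)ᴴ`, each positive semidefinite.
-/

open Matrix

open scoped ComplexOrder

namespace Matrix

variable {n : Type*} [Fintype n]

lemma IsHermitian.star_star_dotProduct_mulVec {α : Type*} [CommSemiring α] [StarRing α]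
    {H : Matrix n n α} (hH : H.IsHermitian) (u v : n → α) :
    star (star u ⬝ᵥ (H *ᵥ v)) = star v ⬝ᵥ (H *ᵥ u) := by
  rw [← star_dotProduct, star_mulVec, hH.eq, dotProduct_mulVec, dotProduct_comm]

lemma PosSemidef.map_re {A : Matrix n n ℂ} (hA : A.PosSemidef) :
    (A.map Complex.re).PosSemidef := by
  rw [posSemidef_iff_dotProduct_mulVec] at hA ⊢
  refine ⟨hA.1.map _ fun z => by simp, fun x => ?_⟩
  have hx : star x ⬝ᵥ (A.map Complex.re *ᵥ x) =
      (star (Complex.ofReal ∘ x) ⬝ᵥ (A *ᵥ (Complex.ofReal ∘ x))).re := by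
    simp [dotProduct, mulVec, Complex.re_sum, Finset.mul_sum]
  rw [hx]
  exact (Complex.nonneg_iff.mp (hA.2 _)).1

end Matrix

lemma div_sq_le_div_div_of_le {c μ s : ℝ} (hc : 0 ≤ c) (hμ : 0 < μ) (h : μ ≤ s) :
    c / s ^ 2 ≤ c / μ / s := by
  have hs : 0 < s := hμ.trans_le h
  rw [div_div]
  exact div_le_div_of_nonneg_left hc (by positivity) (by nlinarith)

theorem stmt7_general {d m : ℕ} (μ : ℝ) (hμ : 0 < μ)
    (lam : Fin d → ℝ) (ψk : Fin d → Fin d → ℂ)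
    (hlam_nonneg : ∀ k, 0 ≤ lam k)
    (dρ : Fin m → Matrix (Fin d) (Fin d) ℂ)
    (hherm : ∀ i, (dρ i).IsHermitian)
    (Ktilde Jtilde : Matrix (Fin m) (Fin m) ℝ)
    (hK : ∀ i j, Ktilde i j = 4 * ∑ k, ∑ l, if μ ≤ lam k ∨ μ ≤ lam l then
        ((star (ψk k) ⬝ᵥ (dρ i *ᵥ ψk l)) *
          (star (ψk l) ⬝ᵥ (dρ j *ᵥ ψk k))).re / (lam k + lam l) ^ 2 else 0)
    (hJ : ∀ i j, Jtilde i j = 2 * ∑ k, ∑ l, if μ ≤ lam k ∨ μ ≤ lam l then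
        ((star (ψk k) ⬝ᵥ (dρ i *ᵥ ψk l)) *
          (star (ψk l) ⬝ᵥ (dρ j *ᵥ ψk k))).re / (lam k + lam l) else 0) :
    ((2 / μ) • Jtilde - Ktilde).PosSemidef := by
  set a : Fin d → Fin d → Fin m → ℂ := fun k l i => star (ψk k) ⬝ᵥ (dρ i *ᵥ ψk l)
  set w : Fin d → Fin d → ℝ := fun k l => if μ ≤ lam k ∨ μ ≤ lam l then
    4 / μ / (lam k + lam l) - 4 / (lam k + lam l) ^ 2 else 0
  have hw : ∀ k l, 0 ≤ w k l := by
    intro k l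
    by_cases hkl : μ ≤ lam k ∨ μ ≤ lam l
    · have hs : μ ≤ lam k + lam l := by
        rcases hkl with h | h <;> linarith [hlam_nonneg k, hlam_nonneg l]
      simpa [w, hkl] using div_sq_le_div_div_of_le (by norm_num : (0 : ℝ) ≤ 4) hμ hs
    · simp [w, hkl]
  have hdecomp : (2 / μ) • Jtilde - Ktilde =
      ∑ k, ∑ l, w k l • (vecMulVec (a k l) (star (a k l))).map Complex.re := by
    ext i j
    have hconj : ∀ k l, star (a k l j) = a l k j := fun k l =>
      (hherm j).star_star_dotProduct_mulVec _ _
    simp only [Matrix.sub_apply, Matrix.smul_apply, Matrix.sum_apply, map_apply, vecMulVec_apply,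
      Pi.star_apply, hconj, hJ, hK, smul_eq_mul, Finset.mul_sum, ← Finset.sum_sub_distrib]
    refine Finset.sum_congr rfl fun k _ => Finset.sum_congr rfl fun l _ => ?_
    simp only [w, a]
    split_ifs <;> ring
  rw [hdecomp]
  exact posSemidef_sum _ fun k _ => posSemidef_sum _ fun l _ =>
    (posSemidef_vecMulVec_self_star (a k l)).map_re.smul (hw k l)

/-- For a density matrix with spectral data `{λ_k, |ψ_k⟩}` and a threshold
`μ > 0`, the matrices
`J̃_{ij} = 2Σ_{(k,l):λ_k≥μ ∨ λ_l≥μ} Re[⟨ψ_k|∂_iρ|ψ_l⟩⟨ψ_l|∂_jρ|ψ_k⟩]/(λ_k+λ_l)`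
and
`K̃_{ij} = 4Σ_{(k,l):λ_k≥μ ∨ λ_l≥μ} Re[⟨ψ_k|∂_iρ|ψ_l⟩⟨ψ_l|∂_jρ|ψ_k⟩]/(λ_k+λ_l)²`
satisfy `K̃ ⪯ (2/μ)J̃`. -/
theorem stmt7 {d m : ℕ} (μ : ℝ) (hμ : 0 < μ)
    (lam : Fin d → ℝ) (ψk : Fin d → Fin d → ℂ)
    (hlam_nonneg : ∀ k, 0 ≤ lam k) (hlam_sum : ∑ k, lam k = 1)
    (horth : ∀ k l, star (ψk k) ⬝ᵥ ψk l = if k = l then 1 else 0)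
    (dρ : Fin m → Matrix (Fin d) (Fin d) ℂ)
    (hherm : ∀ i, (dρ i).IsHermitian)
    (Ktilde Jtilde : Matrix (Fin m) (Fin m) ℝ)
    (hK : ∀ i j, Ktilde i j = 4 * ∑ k, ∑ l, if μ ≤ lam k ∨ μ ≤ lam l then
        ((star (ψk k) ⬝ᵥ (dρ i *ᵥ ψk l)) *
          (star (ψk l) ⬝ᵥ (dρ j *ᵥ ψk k))).re / (lam k + lam l) ^ 2 else 0)
    (hJ : ∀ i j, Jtilde i j = 2 * ∑ k, ∑ l, if μ ≤ lam k ∨ μ ≤ lam l then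
        ((star (ψk k) ⬝ᵥ (dρ i *ᵥ ψk l)) *
          (star (ψk l) ⬝ᵥ (dρ j *ᵥ ψk k))).re / (lam k + lam l) else 0) :
    ((2 / μ) • Jtilde - Ktilde).PosSemidef :=
  stmt7_general μ hμ lam ψk hlam_nonneg dρ hherm Ktilde Jtilde hK hJ
end

section
/- (Gill–Massar bound) Let ρ_θ be a d-dimensional parameterized density matrix with invertible quantum Fisher information matrix J, and let M = {M_x} be any POVM with classical Fisher information matrix I(M)_{ij} = Σ_{x: Tr(ρ_θ M_x)>0} ∂_i Tr(ρ_θ M_x) ∂_j Tr(ρ_θ M_x) / Tr(ρ_θ M_x). Then Tr(J^{-1} I(M)) ≤ d − 1. -/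
/-!
Equip matrices with the real bilinear form `β(A, B) = Re Tr(Aᴴ ρ B)`, which is symmetric and
positive semidefinite; the QFIM is the Gram matrix of the SLDs `Lᵢ` for `β`, and the score of
outcome `x` is `aₓ = (β(Lᵢ, Mₓ))ᵢ`. Since `β(Lᵢ, 𝟙) = Tr(∂ᵢρ) = 0`, projecting `Mₓ - pₓ𝟙`
(`pₓ = Tr(ρMₓ)`) onto the span of the `Lᵢ` gives
`aₓᵀ J⁻¹ aₓ ≤ β(Mₓ - pₓ𝟙, Mₓ - pₓ𝟙) = Tr(MₓρMₓ) - pₓ² ≤ pₓ (Tr Mₓ - pₓ)`,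
the last step because `Mₓ² ≤ (Tr Mₓ) Mₓ`. Dividing by `pₓ` and summing over the POVM,
`Tr(J⁻¹ I(M)) ≤ Σₓ (Tr Mₓ - pₓ) = d - 1`.
-/

open Matrix ComplexOrder
open scoped MatrixOrder

namespace LinearMap.BilinForm
variable {E ι : Type*} [AddCommGroup E] [Module ℝ E] [Fintype ι]

lemma two_mul_sum_sub_sum_sum_le {β : LinearMap.BilinForm ℝ E} (hβ : β.IsSymm)
    (hpos : ∀ y, 0 ≤ β y y) (x : E) (v : ι → E) (c : ι → ℝ) :
    2 * ∑ i, c i * β (v i) x - ∑ i, ∑ j, c i * c j * β (v i) (v j) ≤ β x x := by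
  set s := ∑ i, c i • v i
  have hsy : ∀ y, β s y = ∑ i, c i * β (v i) y := fun y => by simp [s]
  have hss : β s s = ∑ i, ∑ j, c i * c j * β (v i) (v j) := by
    simp only [hsy, s, sum_right, smul_right, Finset.mul_sum, mul_assoc]
  have h := hpos (x - s)
  rw [sub_left, sub_right, sub_right, hβ.eq x s, hss, hsy] at h
  linarith

variable [DecidableEq ι]

lemma dotProduct_inv_mulVec_le {β : LinearMap.BilinForm ℝ E} (hβ : β.IsSymm)
    (hpos : ∀ y, 0 ≤ β y y) (x : E) (v : ι → E) {G : Matrix ι ι ℝ}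
    (hG : ∀ i j, G i j = β (v i) (v j)) (hGu : IsUnit G.det) :
    (fun i => β (v i) x) ⬝ᵥ G⁻¹ *ᵥ (fun i => β (v i) x) ≤ β x x := by
  set a := fun i => β (v i) x
  set c := G⁻¹ *ᵥ a
  have hGc : G *ᵥ c = a := by rw [mulVec_mulVec, mul_nonsing_inv _ hGu, one_mulVec]
  have hquad : ∑ i, ∑ j, c i * c j * β (v i) (v j) = c ⬝ᵥ a := by
    simp only [← hGc, dotProduct, mulVec, hG, Finset.mul_sum]
    exact Finset.sum_congr rfl fun i _ => Finset.sum_congr rfl fun j _ => by ring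
  have h := two_mul_sum_sub_sum_sum_le hβ hpos x v c
  rw [hquad] at h
  simp only [dotProduct, mul_comm (a _)] at h ⊢
  linarith

end LinearMap.BilinForm

namespace Matrix

lemma trace_mul_eq_sum_dotProduct_mulVec {m ι R : Type*} [Fintype m] [Fintype ι]
    [CommSemiring R] (K I : Matrix m m R) (w : ι → R) (a : ι → m → R)
    (hI : ∀ i j, I i j = ∑ x, w x * (a x i * a x j)) :
    (K * I).trace = ∑ x, w x * (a x ⬝ᵥ K *ᵥ a x) := by
  simp only [trace, diag, mul_apply, hI, dotProduct, mulVec, Finset.mul_sum]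
  rw [eq_comm, Finset.sum_comm]
  refine Finset.sum_congr rfl fun i _ => ?_
  rw [Finset.sum_comm]
  exact Finset.sum_congr rfl fun j _ => Finset.sum_congr rfl fun x _ => by ring

variable {𝕜 n : Type*} [RCLike 𝕜] [Fintype n]

noncomputable def reTraceForm (ρ : Matrix n n 𝕜) : LinearMap.BilinForm ℝ (Matrix n n 𝕜) :=
  LinearMap.mk₂ ℝ (fun A B => RCLike.re (Aᴴ * ρ * B).trace)
    (fun A₁ A₂ B => by simp [add_mul, trace_add])
    (fun c A B => by simp [trace_smul, RCLike.smul_re])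
    (fun A B₁ B₂ => by simp [mul_add, trace_add])
    (fun c A B => by simp [trace_smul, RCLike.smul_re])

variable {ρ : Matrix n n 𝕜}

@[simp]
lemma reTraceForm_apply (A B : Matrix n n 𝕜) :
    ρ.reTraceForm A B = RCLike.re (Aᴴ * ρ * B).trace := rfl

lemma isSymm_reTraceForm (hρ : ρ.IsHermitian) : ρ.reTraceForm.IsSymm := by
  refine ⟨fun A B => ?_⟩
  rw [reTraceForm_apply, reTraceForm_apply, ← RCLike.conj_re, RCLike.star_def.symm,
    ← trace_conjTranspose]
  simp [Matrix.mul_assoc, hρ.eq]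

lemma reTraceForm_self_nonneg (hρ : ρ.PosSemidef) (A : Matrix n n 𝕜) :
    0 ≤ ρ.reTraceForm A A :=
  (RCLike.nonneg_iff.mp (hρ.conjTranspose_mul_mul_same A).trace_nonneg).1

lemma reTraceForm_of_isHermitian {A : Matrix n n 𝕜} (hA : A.IsHermitian) (B : Matrix n n 𝕜) :
    ρ.reTraceForm A B = RCLike.re (A * ρ * B).trace := by
  rw [reTraceForm_apply, hA.eq]

lemma re_trace_mul_mul_eq_reTraceForm (hρ : ρ.IsHermitian) (A : Matrix n n 𝕜)
    {B : Matrix n n 𝕜} (hB : B.IsHermitian) :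
    RCLike.re (ρ * A * B).trace = ρ.reTraceForm A B := by
  rw [(isSymm_reTraceForm hρ).eq, reTraceForm_of_isHermitian hB, trace_mul_cycle]

lemma re_trace_sld_mul (hρ : ρ.IsHermitian) {L M : Matrix n n 𝕜} (hL : L.IsHermitian)
    (hM : M.IsHermitian) :
    RCLike.re ((2 : 𝕜)⁻¹ • (L * ρ + ρ * L) * M).trace = ρ.reTraceForm L M := by
  rw [smul_mul, trace_smul, add_mul, trace_add, ← RCLike.ofReal_ofNat, ← RCLike.ofReal_inv,
    smul_eq_mul, RCLike.re_ofReal_mul, map_add, re_trace_mul_mul_eq_reTraceForm hρ L hM,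
    ← reTraceForm_of_isHermitian hL]
  ring

lemma re_trace_jordan (hρ : ρ.IsHermitian) {A B : Matrix n n 𝕜} (hA : A.IsHermitian)
    (hB : B.IsHermitian) :
    RCLike.re ((2 : 𝕜)⁻¹ • (ρ * (A * B + B * A))).trace = ρ.reTraceForm A B := by
  rw [trace_smul, mul_add, trace_add, ← Matrix.mul_assoc, ← Matrix.mul_assoc,
    ← RCLike.ofReal_ofNat, ← RCLike.ofReal_inv, smul_eq_mul, RCLike.re_ofReal_mul, map_add,
    re_trace_mul_mul_eq_reTraceForm hρ A hB, re_trace_mul_mul_eq_reTraceForm hρ B hA,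
    (isSymm_reTraceForm hρ).eq B A]
  ring

variable [DecidableEq n]

lemma PosSemidef.trace_mul_nonneg {A B : Matrix n n 𝕜} (hA : A.PosSemidef) (hB : B.PosSemidef) :
    0 ≤ (A * B).trace := by
  obtain ⟨X, rfl⟩ := CStarAlgebra.nonneg_iff_eq_star_mul_self.mp hB.nonneg
  rw [star_eq_conjTranspose, ← Matrix.mul_assoc, trace_mul_comm]
  simpa only [Matrix.mul_assoc] using (hA.mul_mul_conjTranspose_same X).trace_nonneg

lemma PosSemidef.trace_mul_le_trace_mul {A B C : Matrix n n 𝕜} (hA : A.PosSemidef)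
    (hBC : B ≤ C) :
    (A * B).trace ≤ (A * C).trace := by
  rw [← sub_nonneg, ← trace_sub, ← Matrix.mul_sub]
  exact hA.trace_mul_nonneg (le_iff.mp hBC)

lemma PosSemidef.le_re_trace_of_mem_spectrum {A : Matrix n n 𝕜} (hA : A.PosSemidef) {x : ℝ}
    (hx : x ∈ spectrum ℝ A) : x ≤ RCLike.re A.trace := by
  obtain ⟨i, rfl⟩ := hA.1.spectrum_real_eq_range_eigenvalues ▸ hx
  rw [hA.1.trace_eq_sum_eigenvalues, map_sum]
  simp only [RCLike.ofReal_re]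
  exact Finset.single_le_sum (fun j _ => hA.eigenvalues_nonneg j) (Finset.mem_univ i)

lemma PosSemidef.mul_self_le_re_trace_smul {A : Matrix n n 𝕜} (hA : A.PosSemidef) :
    A * A ≤ RCLike.re A.trace • A := by
  have hA' : IsSelfAdjoint A := hA.1
  have key := cfc_mono (a := A) (f := fun x : ℝ => x * x) (g := fun x => RCLike.re A.trace * x)
    fun x hx => mul_le_mul_of_nonneg_right (hA.le_re_trace_of_mem_spectrum hx)
      (spectrum_nonneg_of_nonneg hA.nonneg hx)
  rwa [cfc_mul (fun x : ℝ => x) (fun x : ℝ => x) A, cfc_id' ℝ A,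
    cfc_const_mul_id (RCLike.re A.trace) A] at key

lemma reTraceForm_self_le (hρ : ρ.PosSemidef) {M : Matrix n n 𝕜} (hM : M.PosSemidef) :
    ρ.reTraceForm M M ≤ RCLike.re (ρ * M).trace * RCLike.re M.trace := by
  have h := hρ.trace_mul_le_trace_mul hM.mul_self_le_re_trace_smul
  rw [Matrix.mul_smul, trace_smul] at h
  calc ρ.reTraceForm M M = RCLike.re (ρ * (M * M)).trace := by
        rw [reTraceForm_of_isHermitian hM.1, Matrix.mul_assoc, trace_mul_comm, Matrix.mul_assoc]
    _ ≤ RCLike.re (RCLike.re M.trace • (ρ * M).trace) := (RCLike.le_iff_re_im.mp h).1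
    _ = RCLike.re (ρ * M).trace * RCLike.re M.trace := by rw [RCLike.smul_re, mul_comm]

variable {ι : Type*} [Fintype ι] [DecidableEq ι]

lemma reTraceForm_dotProduct_inv_mulVec_le (hρ : ρ.PosSemidef) (hρtr : ρ.trace = 1)
    (v : ι → Matrix n n 𝕜) (hv : ∀ i, ρ.reTraceForm (v i) 1 = 0) {G : Matrix ι ι ℝ}
    (hG : ∀ i j, G i j = ρ.reTraceForm (v i) (v j)) (hGu : IsUnit G.det)
    {M : Matrix n n 𝕜} (hM : M.PosSemidef) :
    (fun i => ρ.reTraceForm (v i) M) ⬝ᵥ G⁻¹ *ᵥ (fun i => ρ.reTraceForm (v i) M) ≤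
      RCLike.re (ρ * M).trace * (RCLike.re M.trace - RCLike.re (ρ * M).trace) := by
  set β := ρ.reTraceForm
  set p := RCLike.re (ρ * M).trace
  have hβ : β.IsSymm := isSymm_reTraceForm hρ.1
  have h1M : β 1 M = p := by simp [β, p]
  have h11 : β 1 1 = 1 := by simp [β, hρtr]
  have hv' : (fun i => β (v i) (M - p • 1)) = fun i => β (v i) M := by
    simp [map_sub, map_smul, hv]
  have hxx : β (M - p • 1) (M - p • 1) = β M M - p * p := by
    simp only [map_sub, map_smul, LinearMap.sub_apply, LinearMap.smul_apply, smul_eq_mul,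
      hβ.eq M 1, h1M, h11]
    ring
  have h := LinearMap.BilinForm.dotProduct_inv_mulVec_le hβ (reTraceForm_self_nonneg hρ)
    (M - p • 1) v hG hGu
  rw [hv', hxx] at h
  nlinarith [reTraceForm_self_le hρ hM]

end Matrix

theorem stmt8_general {d m : ℕ} {ι : Type*} [Fintype ι]
    (ρ : Matrix (Fin d) (Fin d) ℂ) (hρ : ρ.PosSemidef) (hρtr : ρ.trace = 1)
    (dρ : Fin m → Matrix (Fin d) (Fin d) ℂ)
    (hdtr : ∀ i, (dρ i).trace = 0)
    (L : Fin m → Matrix (Fin d) (Fin d) ℂ)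
    (hLh : ∀ i, (L i).IsHermitian)
    (hSLD : ∀ i, dρ i = (2:ℂ)⁻¹ • (L i * ρ + ρ * L i))
    (J : Matrix (Fin m) (Fin m) ℝ)
    (hJ : ∀ i j, J i j = ((2:ℂ)⁻¹ • (ρ * (L i * L j + L j * L i))).trace.re)
    (hJu : IsUnit J.det)
    (M : ι → Matrix (Fin d) (Fin d) ℂ)
    (hM : ∀ x, (M x).PosSemidef) (hMsum : ∑ x, M x = 1)
    (I : Matrix (Fin m) (Fin m) ℝ)
    (hI : ∀ i j, I i j = ∑ x, if 0 < (ρ * M x).trace.re then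
        (dρ i * M x).trace.re * (dρ j * M x).trace.re / (ρ * M x).trace.re
      else 0) :
    (J⁻¹ * I).trace ≤ (d : ℝ) - 1 := by
  set β := ρ.reTraceForm
  set p : ι → ℝ := fun x => (ρ * M x).trace.re
  set a : ι → Fin m → ℝ := fun x i => β (L i) (M x)
  have hda : ∀ x i, (dρ i * M x).trace.re = a x i := fun x i => by
    rw [hSLD i]; exact re_trace_sld_mul hρ.1 (hLh i) (hM x).1
  have hL1 : ∀ i, β (L i) 1 = 0 := fun i => by
    rw [← re_trace_sld_mul hρ.1 (hLh i) isHermitian_one, ← hSLD i, Matrix.mul_one, hdtr i]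
    rfl
  have hJβ : ∀ i j, J i j = β (L i) (L j) := fun i j => by
    rw [hJ]; exact re_trace_jordan hρ.1 (hLh i) (hLh j)
  have hIa : ∀ i j, I i j = ∑ x, (if 0 < p x then (p x)⁻¹ else 0) * (a x i * a x j) :=
    fun i j => by
      rw [hI]
      refine Finset.sum_congr rfl fun x _ => ?_
      rw [hda, hda]
      split_ifs <;> simp [p, div_eq_inv_mul]
  have hbound : ∀ x, (if 0 < p x then (p x)⁻¹ else 0) * (a x ⬝ᵥ J⁻¹ *ᵥ a x) ≤
      (M x).trace.re - p x := fun x => by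
    have h := reTraceForm_dotProduct_inv_mulVec_le hρ hρtr L hL1 hJβ hJu (hM x)
    split_ifs with hp
    · rw [inv_mul_le_iff₀ hp]; exact h
    · have := (Complex.nonneg_iff.mp (hM x).trace_nonneg).1
      linarith
  rw [trace_mul_eq_sum_dotProduct_mulVec J⁻¹ I _ a hIa]
  calc _ ≤ ∑ x, ((M x).trace.re - p x) := Finset.sum_le_sum fun x _ => hbound x
    _ = d - 1 := by
      simp [p, Finset.sum_sub_distrib, ← Complex.re_sum, ← trace_sum, ← Matrix.mul_sum, hMsum,
        hρtr]

/-- Gill–Massar bound: for a `d`-dimensional parameterized density matrix `ρ`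
with traceless Hermitian derivatives `∂_iρ`, symmetric logarithmic derivatives
`L_i` (`∂_iρ = (L_iρ + ρL_i)/2`), invertible QFIM
`J_{ij} = Tr(ρ(L_iL_j + L_jL_i)/2)`, and any POVM `{M_x}` with CFIM
`I(M)_{ij} = Σ_{x:Tr(ρM_x)>0} ∂_iTr(ρM_x)∂_jTr(ρM_x)/Tr(ρM_x)`, we have
`Tr(J⁻¹ I(M)) ≤ d − 1`. -/
theorem stmt8 {d m : ℕ} {ι : Type*} [Fintype ι]
    (ρ : Matrix (Fin d) (Fin d) ℂ) (hρ : ρ.PosSemidef) (hρtr : ρ.trace = 1)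
    (dρ : Fin m → Matrix (Fin d) (Fin d) ℂ)
    (hherm : ∀ i, (dρ i).IsHermitian) (hdtr : ∀ i, (dρ i).trace = 0)
    (L : Fin m → Matrix (Fin d) (Fin d) ℂ)
    (hLh : ∀ i, (L i).IsHermitian)
    (hSLD : ∀ i, dρ i = (2:ℂ)⁻¹ • (L i * ρ + ρ * L i))
    (J : Matrix (Fin m) (Fin m) ℝ)
    (hJ : ∀ i j, J i j = ((2:ℂ)⁻¹ • (ρ * (L i * L j + L j * L i))).trace.re)
    (hJu : IsUnit J.det)
    (M : ι → Matrix (Fin d) (Fin d) ℂ)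
    (hM : ∀ x, (M x).PosSemidef) (hMsum : ∑ x, M x = 1)
    (I : Matrix (Fin m) (Fin m) ℝ)
    (hI : ∀ i j, I i j = ∑ x, if 0 < (ρ * M x).trace.re then
        (dρ i * M x).trace.re * (dρ j * M x).trace.re / (ρ * M x).trace.re
      else 0) :
    (J⁻¹ * I).trace ≤ (d : ℝ) - 1 :=
  stmt8_general ρ hρ hρtr dρ hdtr L hLh hSLD J hJ hJu M hM hMsum I hI
end

section
/- Let ρ_θ be a rank-r parameterized density matrix supported on projector Π with Π (∂_i ρ_θ) Π = 0 for all parameters i (derivatives take the state out of its support). Then for any POVM M on the d-dimensional space, Tr(J^{-1} I(M)) ≤ d − r. -/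
open Matrix ComplexOrder

/-!
Fix an outcome with POVM element `M`, put `v i = Re Tr(∂ᵢρ M)` and `a = J⁻¹ v`, and combine
`L = ∑ aᵢ Lᵢ`, `D = ∑ aᵢ ∂ᵢρ = (Lρ + ρL)/2`. Then `vᵀJ⁻¹v = Re Tr(D M) = Tr(ρ L²)`.
As `ΠDΠ = 0`, the trace `Tr(D M)` does not change when `M` is replaced by `M' = M - ΠMΠ`, and
Cauchy–Schwarz for the semi-inner product `(X, Y) ↦ Tr(ρ Xᴴ Y)` gives
`2 Re Tr(D M) ≤ Tr(ρ L²) + Tr(ρ M'²)`. Since `Π` fixes the support of `ρ`,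
`Tr(ρ M'²) = Tr(ρ M (1 - Π) M) ≤ Tr(ρ M) Tr((1 - Π) M)`. Hence every outcome contributes at most
`Tr((1 - Π) M)` to `Tr(J⁻¹ I)`, and these contributions add up to `Tr(1 - Π) = d - r`.
-/

namespace Matrix

open scoped MatrixOrder Matrix.Norms.Frobenius

variable {𝕜 : Type*} [RCLike 𝕜] {m n : Type*} [Fintype m] [Fintype n]
  {ι : Type*} [Fintype ι]

theorem frobenius_norm_sq_eq_re_trace (X : Matrix m n 𝕜) :
    ‖X‖ ^ 2 = RCLike.re (Xᴴ * X).trace := by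
  rw [frobenius_norm_def, ← Real.rpow_natCast, ← Real.rpow_mul (by positivity), Nat.cast_ofNat,
    one_div_mul_cancel two_ne_zero, Real.rpow_one, trace, map_sum, Finset.sum_comm]
  simp only [Real.rpow_two]
  refine Finset.sum_congr rfl fun j _ => ?_
  simp [mul_apply, RCLike.conj_mul]

theorem re_trace_conjTranspose (X : Matrix n n 𝕜) : RCLike.re Xᴴ.trace = RCLike.re X.trace := by
  rw [trace_conjTranspose, RCLike.star_def, RCLike.conj_re]

theorem re_trace_mul_mul_comm {A B C : Matrix n n 𝕜} (hA : A.IsHermitian) (hB : B.IsHermitian)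
    (hC : C.IsHermitian) : RCLike.re (A * (B * C)).trace = RCLike.re (A * (C * B)).trace := by
  rw [← re_trace_conjTranspose, conjTranspose_mul, conjTranspose_mul, hA.eq, hB.eq, hC.eq,
    trace_mul_comm]

theorem re_trace_smul_mul_add_mul {ρ A B : Matrix n n 𝕜} (hρ : ρ.IsHermitian) (hA : A.IsHermitian)
    (hB : B.IsHermitian) :
    RCLike.re ((2 : 𝕜)⁻¹ • (ρ * (A * B + B * A))).trace = RCLike.re (ρ * (A * B)).trace := by
  rw [trace_smul, smul_eq_mul, show (2 : 𝕜)⁻¹ = ((2⁻¹ : ℝ) : 𝕜) by push_cast; rfl,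
    RCLike.re_ofReal_mul, mul_add, trace_add, map_add, re_trace_mul_mul_comm hρ hB hA]
  ring

theorem re_trace_sum_smul_mul (a : ι → ℝ) (X : ι → Matrix n n 𝕜) (Y : Matrix n n 𝕜) :
    RCLike.re ((∑ i, (a i : 𝕜) • X i) * Y).trace = ∑ i, a i * RCLike.re (X i * Y).trace := by
  simp [Finset.sum_mul, trace_sum, trace_smul, RCLike.smul_re]

theorem re_trace_mul_sum_smul_mul_sum_smul (ρ : Matrix n n 𝕜) (a : ι → ℝ) (L : ι → Matrix n n 𝕜) :
    RCLike.re (ρ * ((∑ i, (a i : 𝕜) • L i) * ∑ j, (a j : 𝕜) • L j)).trace =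
      ∑ i, ∑ j, a i * a j * RCLike.re (ρ * (L i * L j)).trace := by
  simp only [algebraMap_smul, Finset.mul_sum, Finset.sum_mul, Matrix.mul_smul, smul_mul,
    trace_sum, trace_smul, map_sum, RCLike.smul_re]
  rw [Finset.sum_comm]
  exact Finset.sum_congr rfl fun i _ => Finset.sum_congr rfl fun j _ => by ring

variable [DecidableEq n]

theorem PosSemidef.re_trace_mul_eq_frobenius_norm_sq {A B : Matrix n n 𝕜}
    (hA : A.PosSemidef) (hB : B.PosSemidef) :
    RCLike.re (A * B).trace = ‖CFC.sqrt A * CFC.sqrt B‖ ^ 2 := by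
  have hSA := (CFC.sqrt_nonneg A).posSemidef.isHermitian
  have hSB := (CFC.sqrt_nonneg B).posSemidef.isHermitian
  rw [frobenius_norm_sq_eq_re_trace, conjTranspose_mul, hSA.eq, hSB.eq, Matrix.mul_assoc,
    ← Matrix.mul_assoc (CFC.sqrt A), CFC.sqrt_mul_sqrt_self A hA.nonneg, ← Matrix.mul_assoc,
    trace_mul_cycle, CFC.sqrt_mul_sqrt_self B hB.nonneg, trace_mul_comm B]

theorem PosSemidef.re_trace_mul_nonneg {A B : Matrix n n 𝕜}
    (hA : A.PosSemidef) (hB : B.PosSemidef) : 0 ≤ RCLike.re (A * B).trace :=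
  hA.re_trace_mul_eq_frobenius_norm_sq hB ▸ sq_nonneg _

theorem PosSemidef.re_trace_mul_le {A B : Matrix n n 𝕜} (hA : A.PosSemidef) (hB : B.PosSemidef) :
    RCLike.re (A * B).trace ≤ RCLike.re A.trace * RCLike.re B.trace := by
  have hsq {C : Matrix n n 𝕜} (hC : C.PosSemidef) : ‖CFC.sqrt C‖ ^ 2 = RCLike.re C.trace := by
    rw [frobenius_norm_sq_eq_re_trace, (CFC.sqrt_nonneg C).posSemidef.isHermitian.eq,
      CFC.sqrt_mul_sqrt_self C hC.nonneg]
  rw [hA.re_trace_mul_eq_frobenius_norm_sq hB, ← hsq hA, ← hsq hB, ← mul_pow]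
  gcongr
  exact frobenius_norm_mul _ _

theorem PosSemidef.re_trace_mul_mul_mul_le {A B C : Matrix n n 𝕜}
    (hA : A.PosSemidef) (hB : B.PosSemidef) (hC : C.PosSemidef) :
    RCLike.re (A * (B * (C * B))).trace ≤ RCLike.re (A * B).trace * RCLike.re (C * B).trace := by
  set S := CFC.sqrt B
  have hS : S * S = B := CFC.sqrt_mul_sqrt_self B hB.nonneg
  have hSh : Sᴴ = S := (CFC.sqrt_nonneg B).posSemidef.isHermitian
  have sandwich (X : Matrix n n 𝕜) : (S * X * S).trace = (X * B).trace := by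
    rw [trace_mul_cycle, hS, trace_mul_comm]
  have hSAS : (S * A * S).PosSemidef := by simpa [hSh] using hA.mul_mul_conjTranspose_same S
  have hSCS : (S * C * S).PosSemidef := by simpa [hSh] using hC.mul_mul_conjTranspose_same S
  have hprod : (S * A * S * (S * C * S)).trace = (A * (B * (C * B))).trace := by
    rw [show S * A * S * (S * C * S) = S * (A * (S * S * (C * S))) by simp only [Matrix.mul_assoc],
      trace_mul_comm, ← hS]
    simp only [Matrix.mul_assoc]
  simpa only [hprod, sandwich] using hSAS.re_trace_mul_le hSCS

theorem PosSemidef.two_mul_re_trace_mul_le {ρ : Matrix n n 𝕜} (hρ : ρ.PosSemidef)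
    (X Y : Matrix n n 𝕜) :
    2 * RCLike.re (ρ * (Xᴴ * Y)).trace ≤
      RCLike.re (ρ * (Xᴴ * X)).trace + RCLike.re (ρ * (Yᴴ * Y)).trace := by
  have h := hρ.re_trace_mul_nonneg (posSemidef_conjTranspose_mul_self (X - Y))
  have hconj : RCLike.re (ρ * (Yᴴ * X)).trace = RCLike.re (ρ * (Xᴴ * Y)).trace := by
    rw [← re_trace_conjTranspose, conjTranspose_mul, conjTranspose_mul, conjTranspose_conjTranspose,
      hρ.isHermitian.eq, trace_mul_comm]
  simp only [conjTranspose_sub, sub_mul, mul_sub, trace_sub, map_sub] at h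
  linarith

theorem trace_eq_rank_of_mul_self {K : Type*} [Field K] {P : Matrix n n K} (h : P * P = P) :
    P.trace = P.rank := by
  have hP : IsIdempotentElem (toLin' P) := by
    rw [IsIdempotentElem, Module.End.mul_eq_comp, ← toLin'_mul, h]
  rw [← trace_toLin'_eq, (LinearMap.IsIdempotentElem.isProj_range _ hP).trace]
  rfl

theorem posSemidef_one_sub_of_mul_self {P : Matrix n n 𝕜} (hP : P.IsHermitian) (hPP : P * P = P) :
    (1 - P).PosSemidef := by
  have h : (1 - P)ᴴ * (1 - P) = 1 - P := by
    rw [conjTranspose_sub, conjTranspose_one, hP.eq, sub_mul, mul_sub, mul_sub, hPP]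
    simp
  exact h ▸ posSemidef_conjTranspose_mul_self (1 - P)

theorem two_mul_re_trace_mul_le_of_sld {ρ P L D M : Matrix n n 𝕜} (hρ : ρ.PosSemidef)
    (hP : P.IsHermitian) (hPP : P * P = P) (hPρ : P * ρ = ρ) (hL : L.IsHermitian)
    (hD : D = (2 : 𝕜)⁻¹ • (L * ρ + ρ * L)) (hPDP : P * D * P = 0) (hM : M.PosSemidef) :
    2 * RCLike.re (D * M).trace ≤
      RCLike.re (ρ * (L * L)).trace + RCLike.re (ρ * M).trace * RCLike.re ((1 - P) * M).trace := by
  set Q := 1 - P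
  have hρP : ρ * P = ρ := by simpa [hP.eq, hρ.isHermitian.eq] using congrArg conjTranspose hPρ
  have hQ : Q.PosSemidef := posSemidef_one_sub_of_mul_self hP hPP
  set M' := M - P * M * P
  have hM' : M'.IsHermitian := by
    refine hM.isHermitian.sub ?_
    simpa [hP.eq] using (hM.mul_mul_conjTranspose_same P).isHermitian
  have hDM : (D * M).trace = (D * M').trace := by
    have hcycle : (D * (P * M * P)).trace = (P * D * P * M).trace := by
      rw [trace_mul_comm, Matrix.mul_assoc, trace_mul_comm]; simp only [Matrix.mul_assoc]
    rw [mul_sub, trace_sub, hcycle, hPDP, zero_mul, trace_zero, sub_zero]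
  have hDM' : RCLike.re (D * M').trace = RCLike.re (ρ * (L * M')).trace := by
    have hLρM' : RCLike.re (L * ρ * M').trace = RCLike.re (ρ * (L * M')).trace := by
      rw [trace_mul_cycle, trace_mul_comm, re_trace_mul_mul_comm hρ.isHermitian hM' hL]
    rw [hD, smul_mul_assoc, trace_smul, smul_eq_mul,
      show (2 : 𝕜)⁻¹ = ((2⁻¹ : ℝ) : 𝕜) by push_cast; rfl, RCLike.re_ofReal_mul, add_mul,
      trace_add, map_add, hLρM', Matrix.mul_assoc]
    ring
  have hM'M' : ρ * (M' * M') = ρ * (M * (Q * M)) := by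
    have hρM' : ρ * M' = ρ * M * Q := by
      calc ρ * M' = ρ * M - ρ * P * M * P := by simp only [M', mul_sub, Matrix.mul_assoc]
        _ = ρ * M * Q := by rw [hρP]; simp only [Q, mul_sub, mul_one]
    have hQM' : Q * M' = Q * M := by
      calc Q * M' = Q * M - (P - P * P) * M * P := by simp only [Q, M']; noncomm_ring
        _ = Q * M := by rw [hPP, sub_self, zero_mul, zero_mul, sub_zero]
    rw [← Matrix.mul_assoc, hρM', Matrix.mul_assoc, Matrix.mul_assoc, hQM']
  have hCS := hρ.two_mul_re_trace_mul_le L M'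
  rw [hL.eq, hM'.eq, hM'M'] at hCS
  have hsandwich := hρ.re_trace_mul_mul_mul_le hM hQ
  rw [hDM, hDM']
  linarith

theorem dotProduct_inv_mulVec_le_of_sld [DecidableEq ι] {ρ P M : Matrix n n 𝕜}
    {L dρ : ι → Matrix n n 𝕜} {J : Matrix ι ι ℝ} (hρ : ρ.PosSemidef)
    (hP : P.IsHermitian) (hPP : P * P = P) (hPρ : P * ρ = ρ) (hL : ∀ i, (L i).IsHermitian)
    (hSLD : ∀ i, dρ i = (2 : 𝕜)⁻¹ • (L i * ρ + ρ * L i)) (hsupp : ∀ i, P * dρ i * P = 0)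
    (hJ : ∀ i j, J i j = RCLike.re (ρ * (L i * L j)).trace) (hJu : IsUnit J.det)
    (hM : M.PosSemidef) (v : ι → ℝ) (hv : ∀ i, v i = RCLike.re (dρ i * M).trace) :
    v ⬝ᵥ (J⁻¹ *ᵥ v) ≤ RCLike.re (ρ * M).trace * RCLike.re ((1 - P) * M).trace := by
  set a := J⁻¹ *ᵥ v
  have hJa : J *ᵥ a = v := by rw [mulVec_mulVec, mul_nonsing_inv J hJu, one_mulVec]
  set La := ∑ i, (a i : 𝕜) • L i
  set Da := ∑ i, (a i : 𝕜) • dρ i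
  have hLa : La.IsHermitian :=
    isSelfAdjoint_sum _ fun i _ => (hL i).smul (RCLike.conj_ofReal (a i))
  have hDa : Da = (2 : 𝕜)⁻¹ • (La * ρ + ρ * La) := by
    simp only [Da, La, hSLD, Finset.sum_mul, Finset.mul_sum, smul_mul_assoc, mul_smul_comm,
      smul_add, Finset.sum_add_distrib, Finset.smul_sum, smul_comm (a _ : 𝕜)]
  have hPDP : P * Da * P = 0 := by
    simp [Da, Finset.mul_sum, Finset.sum_mul, hsupp]
  have hDaM : RCLike.re (Da * M).trace = a ⬝ᵥ v := by
    rw [re_trace_sum_smul_mul]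
    simp [dotProduct, hv]
  have hLaLa : RCLike.re (ρ * (La * La)).trace = a ⬝ᵥ v := by
    rw [re_trace_mul_sum_smul_mul_sum_smul, ← hJa]
    simp only [dotProduct, mulVec, hJ, Finset.mul_sum]
    exact Finset.sum_congr rfl fun i _ => Finset.sum_congr rfl fun j _ => by ring
  have key := two_mul_re_trace_mul_le_of_sld hρ hP hPP hPρ hLa hDa hPDP hM
  rw [hDaM, hLaLa] at key
  rw [dotProduct_comm]
  linarith

theorem trace_mul_eq_sum_dotProduct_mulVec_div {R κ : Type*} [Field R] [Fintype κ]
    (K I : Matrix ι ι R) (v : κ → ι → R) (p : κ → R)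
    (hI : ∀ i j, I i j = ∑ x, v x i * v x j / p x) :
    (K * I).trace = ∑ x, v x ⬝ᵥ (K *ᵥ v x) / p x := by
  simp only [trace, diag, mul_apply, hI, dotProduct, mulVec, Finset.mul_sum, Finset.sum_div]
  refine (Finset.sum_congr rfl fun i _ => Finset.sum_comm).trans (Finset.sum_comm.trans ?_)
  exact Finset.sum_congr rfl fun x _ => Finset.sum_congr rfl fun i _ =>
    Finset.sum_congr rfl fun j _ => by ring

end Matrix

theorem stmt11_general {d m r : ℕ} {ι : Type*} [Fintype ι]
    (ρ : Matrix (Fin d) (Fin d) ℂ) (hρ : ρ.PosSemidef)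
    (Pr : Matrix (Fin d) (Fin d) ℂ) (hPh : Pr.IsHermitian)
    (hPproj : Pr * Pr = Pr) (hPrank : Pr.rank = r) (hPρ : Pr * ρ = ρ)
    (dρ : Fin m → Matrix (Fin d) (Fin d) ℂ)
    (hsupp : ∀ i, Pr * dρ i * Pr = 0)
    (L : Fin m → Matrix (Fin d) (Fin d) ℂ)
    (hLh : ∀ i, (L i).IsHermitian)
    (hSLD : ∀ i, dρ i = (2:ℂ)⁻¹ • (L i * ρ + ρ * L i))
    (J : Matrix (Fin m) (Fin m) ℝ)
    (hJ : ∀ i j, J i j = ((2:ℂ)⁻¹ • (ρ * (L i * L j + L j * L i))).trace.re)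
    (hJu : IsUnit J.det)
    (M : ι → Matrix (Fin d) (Fin d) ℂ)
    (hM : ∀ x, (M x).PosSemidef) (hMsum : ∑ x, M x = 1)
    (I : Matrix (Fin m) (Fin m) ℝ)
    (hI : ∀ i j, I i j = ∑ x, if 0 < (ρ * M x).trace.re then
        (dρ i * M x).trace.re * (dρ j * M x).trace.re / (ρ * M x).trace.re
      else 0) :
    (J⁻¹ * I).trace ≤ (d : ℝ) - (r : ℝ) := by
  set p := fun x => (ρ * M x).trace.re
  set v := fun x i => (dρ i * M x).trace.re
  have hp (x : ι) : 0 ≤ p x := hρ.re_trace_mul_nonneg (hM x)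
  have hI' (i j : Fin m) : I i j = ∑ x, v x i * v x j / p x := by
    rw [hI]
    refine Finset.sum_congr rfl fun x _ => ?_
    split_ifs with hpos
    · rfl
    · rw [show p x = 0 from le_antisymm (not_lt.mp hpos) (hp x), div_zero]
  have hJ' (i j : Fin m) : J i j = (ρ * (L i * L j)).trace.re :=
    (hJ i j).trans (re_trace_smul_mul_add_mul hρ.isHermitian (hLh i) (hLh j))
  have hQ := posSemidef_one_sub_of_mul_self hPh hPproj
  have hsum : ∑ x, ((1 - Pr) * M x).trace.re = d - r := by
    rw [← Complex.re_sum, ← trace_sum, ← Finset.mul_sum, hMsum, mul_one, trace_sub, trace_one,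
      trace_eq_rank_of_mul_self hPproj, hPrank]
    simp
  rw [trace_mul_eq_sum_dotProduct_mulVec_div _ _ v p hI', ← hsum]
  refine Finset.sum_le_sum fun x _ => div_le_of_le_mul₀ (hp x) (hQ.re_trace_mul_nonneg (hM x)) ?_
  rw [mul_comm]
  exact dotProduct_inv_mulVec_le_of_sld hρ hPh hPproj hPρ hLh hSLD hsupp hJ' hJu (hM x) (v x)
    fun i => rfl

/-- Tightened Gill–Massar bound for a rank-`r` parameterized density matrix `ρ`
supported on the projector `Π` (so `Πρ = ρ` and `rank Π = rank ρ = r`), with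
derivatives taking the state out of its support (`Π(∂_iρ)Π = 0`): for any POVM
`M` on the `d`-dimensional space, `Tr(J⁻¹ I(M)) ≤ d − r`, where `J` is the
(invertible) QFIM defined via symmetric logarithmic derivatives. -/
theorem stmt11 {d m r : ℕ} {ι : Type*} [Fintype ι]
    (ρ : Matrix (Fin d) (Fin d) ℂ) (hρ : ρ.PosSemidef) (hρtr : ρ.trace = 1)
    (hrank : ρ.rank = r)
    (Pr : Matrix (Fin d) (Fin d) ℂ) (hPh : Pr.IsHermitian)
    (hPproj : Pr * Pr = Pr) (hPrank : Pr.rank = r) (hPρ : Pr * ρ = ρ)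
    (dρ : Fin m → Matrix (Fin d) (Fin d) ℂ)
    (hherm : ∀ i, (dρ i).IsHermitian) (hdtr : ∀ i, (dρ i).trace = 0)
    (hsupp : ∀ i, Pr * dρ i * Pr = 0)
    (L : Fin m → Matrix (Fin d) (Fin d) ℂ)
    (hLh : ∀ i, (L i).IsHermitian)
    (hSLD : ∀ i, dρ i = (2:ℂ)⁻¹ • (L i * ρ + ρ * L i))
    (J : Matrix (Fin m) (Fin m) ℝ)
    (hJ : ∀ i j, J i j = ((2:ℂ)⁻¹ • (ρ * (L i * L j + L j * L i))).trace.re)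
    (hJu : IsUnit J.det)
    (M : ι → Matrix (Fin d) (Fin d) ℂ)
    (hM : ∀ x, (M x).PosSemidef) (hMsum : ∑ x, M x = 1)
    (I : Matrix (Fin m) (Fin m) ℝ)
    (hI : ∀ i j, I i j = ∑ x, if 0 < (ρ * M x).trace.re then
        (dρ i * M x).trace.re * (dρ j * M x).trace.re / (ρ * M x).trace.re
      else 0) :
    (J⁻¹ * I).trace ≤ (d : ℝ) - (r : ℝ) :=
  stmt11_general ρ hρ Pr hPh hPproj hPrank hPρ dρ hsupp L hLh hSLD J hJ hJu M hM hMsum I hI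
end

section
/- For the pure state |ψ⟩ = √f|φ⟩ + √(1−f)|φ⊥⟩ in ℂ^d with ⟨φ|φ⊥⟩ = 0, define X_f = 2f(1−f)(|φ⟩⟨φ| − |φ⊥⟩⟨φ⊥|) + (1−2f)√(f(1−f))(|φ⟩⟨φ⊥| + |φ⊥⟩⟨φ|). Then Tr(X_f²) + 2⟨ψ|X_f²|ψ⟩ = 4 f(1−f), so that ((d+1)/(d+2))(Tr(X_f²) + 2⟨ψ|X_f²|ψ⟩) = 4(d+1)/(d+2) · f(1−f). -/
open Matrix

private lemma vmv_mul {n : Type*} [Fintype n] (u v w x : n → ℂ) :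
    vecMulVec u v * vecMulVec w x = (v ⬝ᵥ w) • vecMulVec u x := by
  ext i j
  simp only [Matrix.mul_apply, vecMulVec_apply, Matrix.smul_apply, dotProduct, smul_eq_mul,
    Finset.sum_mul]
  apply Finset.sum_congr rfl
  intros; ring

private lemma vmv_mulVec {n : Type*} [Fintype n] (u v w : n → ℂ) :
    vecMulVec u v *ᵥ w = (v ⬝ᵥ w) • u := by
  ext i
  simp only [mulVec, dotProduct, vecMulVec_apply, Pi.smul_apply, smul_eq_mul, Finset.sum_mul]
  apply Finset.sum_congr rfl
  intros; ring

private lemma trace_vmv {n : Type*} [Fintype n] (u v : n → ℂ) :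
    (vecMulVec u v).trace = v ⬝ᵥ u := by
  simp [Matrix.trace, Matrix.diag, vecMulVec_apply, dotProduct, mul_comm]

/-- For `|ψ⟩ = √f|φ⟩ + √(1−f)|φ⊥⟩` with `⟨φ|φ⊥⟩ = 0` and the deviation
observable `X_f = 2f(1−f)(|φ⟩⟨φ| − |φ⊥⟩⟨φ⊥|)
  + (1−2f)√(f(1−f))(|φ⟩⟨φ⊥| + |φ⊥⟩⟨φ|)`, one has
`Tr(X_f²) + 2⟨ψ|X_f²|ψ⟩ = 4f(1−f)`, hence
`((d+1)/(d+2))(Tr(X_f²) + 2⟨ψ|X_f²|ψ⟩) = 4(d+1)/(d+2)·f(1−f)`. -/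
theorem stmt17 {d : ℕ} (f : ℝ) (hf : f ∈ Set.Ioo (0:ℝ) 1)
    (φ φp : Fin d → ℂ)
    (hφ : star φ ⬝ᵥ φ = 1) (hφp : star φp ⬝ᵥ φp = 1)
    (horth : star φ ⬝ᵥ φp = 0)
    (ψ : Fin d → ℂ)
    (hψ : ψ = ((Real.sqrt f : ℝ) : ℂ) • φ + ((Real.sqrt (1-f) : ℝ) : ℂ) • φp)
    (X : Matrix (Fin d) (Fin d) ℂ)
    (hX : X = ((2 * f * (1-f) : ℝ) : ℂ) •
        (vecMulVec φ (star φ) - vecMulVec φp (star φp)) +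
      (((1 - 2*f) * Real.sqrt (f * (1-f)) : ℝ) : ℂ) •
        (vecMulVec φ (star φp) + vecMulVec φp (star φ))) :
    (X * X).trace + 2 * (star ψ ⬝ᵥ ((X * X) *ᵥ ψ)) = ((4 * f * (1-f) : ℝ) : ℂ) ∧
    ((((d : ℝ) + 1) / ((d : ℝ) + 2) : ℝ) : ℂ) *
        ((X * X).trace + 2 * (star ψ ⬝ᵥ ((X * X) *ᵥ ψ))) =
      (((4 * ((d : ℝ) + 1) / ((d : ℝ) + 2)) * (f * (1-f)) : ℝ) : ℂ) := by
  obtain ⟨hf0, hf1⟩ := hf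
  have hf0' : (0:ℝ) ≤ f := le_of_lt hf0
  have hf1' : (0:ℝ) ≤ 1 - f := by linarith
  have hff : (0:ℝ) ≤ f * (1 - f) := mul_nonneg hf0' hf1'
  have horth' : star φp ⬝ᵥ φ = 0 := by
    have := congrArg (starRingEnd ℂ) horth
    simpa [dotProduct, map_sum, mul_comm] using this
  set r : ℝ := Real.sqrt (f * (1-f)) with hrdef
  set s : ℝ := Real.sqrt f with hsdef
  set t : ℝ := Real.sqrt (1-f) with htdef
  have hrc : ((r:ℝ):ℂ) * ((r:ℝ):ℂ) = (f:ℂ) * (1 - (f:ℂ)) := by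
    rw [← Complex.ofReal_mul, hrdef, Real.mul_self_sqrt hff]; push_cast; ring
  have hsc : ((s:ℝ):ℂ) * ((s:ℝ):ℂ) = (f:ℂ) := by
    rw [← Complex.ofReal_mul, hsdef, Real.mul_self_sqrt hf0']
  have htc : ((t:ℝ):ℂ) * ((t:ℝ):ℂ) = 1 - (f:ℂ) := by
    rw [← Complex.ofReal_mul, htdef, Real.mul_self_sqrt hf1']; push_cast; ring
  have hXX : X * X = ((f * (1-f) : ℝ) : ℂ) •
      (vecMulVec φ (star φ) + vecMulVec φp (star φp)) := by
    subst hX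
    simp only [add_mul, mul_add, sub_mul, mul_sub, smul_mul_assoc, Matrix.mul_smul,
      vmv_mul, hφ, hφp, horth, horth', one_smul, zero_smul, smul_smul]
    ext i j
    simp only [Matrix.add_apply, Matrix.sub_apply, Matrix.smul_apply, Matrix.zero_apply,
      smul_eq_mul, Matrix.sub_apply]
    push_cast
    linear_combination ((1 - 2*(f:ℂ))^2 *
      (vecMulVec φ (star φ) i j + vecMulVec φp (star φp) i j)) * hrc
  have htr : (X * X).trace = ((2 * (f * (1-f)) : ℝ) : ℂ) := by
    rw [hXX, Matrix.trace_smul, Matrix.trace_add, trace_vmv, trace_vmv, hφ, hφp, smul_eq_mul]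
    push_cast; ring
  have hstar : ∀ (c : ℝ) (v : Fin d → ℂ), star (((c:ℝ):ℂ) • v) = ((c:ℝ):ℂ) • star v := by
    intro c v
    ext i
    simp [Pi.smul_apply, Complex.conj_ofReal]
  have hq : star ψ ⬝ᵥ ((X * X) *ᵥ ψ) = ((f * (1-f) : ℝ) : ℂ) := by
    rw [hXX]
    subst hψ
    simp only [star_add, hstar, Matrix.smul_mulVec, Matrix.add_mulVec, vmv_mulVec,
      Matrix.mulVec_add, Matrix.mulVec_smul, dotProduct_add, add_dotProduct,
      smul_dotProduct, dotProduct_smul, hφ, hφp, horth, horth', smul_eq_mul]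
    push_cast
    linear_combination ((f:ℂ)*(1-(f:ℂ))) * hsc + ((f:ℂ)*(1-(f:ℂ))) * htc
  constructor
  · rw [htr, hq]; push_cast; ring
  · rw [htr, hq]; push_cast; ring
end

section
/- Let {q_s, |s⟩} be a complex projective 3-design in dimension d, let |ψ⟩ and |φ⟩ be unit vectors with f = |⟨φ|ψ⟩|², and define the estimator f̂(s) = (d+1)|⟨φ|s⟩|² − 1 for outcome s drawn with probability q_s d ⟨s|ψ⟩⟨ψ|s⟩ (the shadow estimator of fidelity). Then E[f̂] = f, and the variance satisfies E[(f̂ − f)²] = 2(d+1)(1+2f)/(d+2) − (1+f)². -/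
/-!
Averaging `(|ψ⟩⟨ψ|)^{⊗3}` over the Haar measure gives the symmetric projector, i.e. the sum of
the six permutation operators of `(ℂ^d)^{⊗3}` divided by `d(d+1)(d+2)`. Sandwiching the design
identity between `⟨U ⊗ V ⊗ W|` and `|X ⊗ Y ⊗ Z⟩` therefore evaluates every third moment of the
design as a sum over the six pairings of `U, V, W` with `X, Y, Z`; tracing out one tensor factor
(summing over a basis and using `⟨s|s⟩ = 1`) gives the second and first moments.

With `a_s = |⟨φ|s⟩|²` and `b_s = |⟨s|ψ⟩|²`, the mean and the second moment of `f̂` under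
`p_s = d q_s b_s` are combinations of `Σ q b = 1/d`, `Σ q a b = (1+f)/(d(d+1))` and
`Σ q a² b = (2+4f)/(d(d+1)(d+2))`.
-/
open Matrix

section TensorCube

variable {R α β γ : Type*} [CommSemiring R]

def tensorCube (a : α → R) (b : β → R) (c : γ → R) : α × β × γ → R :=
  fun i => a i.1 * b i.2.1 * c i.2.2

theorem star_tensorCube [StarRing R] (a : α → R) (b : β → R) (c : γ → R) :
    star (tensorCube a b c) = tensorCube (star a) (star b) (star c) := by
  ext i
  simp only [tensorCube, Pi.star_apply, star_mul']

variable [Fintype α] [Fintype β] [Fintype γ]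

theorem sum_tensorCube (a : α → R) (b : β → R) (c : γ → R) :
    ∑ i, tensorCube a b c i = (∑ i, a i) * (∑ i, b i) * (∑ i, c i) := by
  rw [mul_assoc, Fintype.sum_mul_sum, Fintype.sum_mul_sum, Fintype.sum_prod_type]
  simp only [tensorCube, Fintype.sum_prod_type, Finset.mul_sum, mul_assoc]

theorem tensorCube_dotProduct (a x : α → R) (b y : β → R) (c z : γ → R) :
    tensorCube a b c ⬝ᵥ tensorCube x y z = (a ⬝ᵥ x) * (b ⬝ᵥ y) * (c ⬝ᵥ z) := by
  simp only [dotProduct, ← sum_tensorCube]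
  exact Fintype.sum_congr _ _ fun i => by simp only [tensorCube]; ring

theorem sum_prod_mul_boole [DecidableEq α] [DecidableEq β] [DecidableEq γ]
    (u : α × β × γ → R) (a : α) (b : β) (c : γ) :
    ∑ i, u i * (if i.1 = a ∧ i.2.1 = b ∧ i.2.2 = c then 1 else 0) = u (a, b, c) := by
  simp [Fintype.sum_prod_type, ite_and]

end TensorCube

theorem sum_dotProduct_single_mul_single_dotProduct {n R : Type*} [Fintype n] [DecidableEq n]
    [CommSemiring R] (v w : n → R) :
    ∑ k, (v ⬝ᵥ Pi.single k 1) * (Pi.single k 1 ⬝ᵥ w) = v ⬝ᵥ w := by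
  simp only [dotProduct_single, single_dotProduct, mul_one, one_mul]
  rfl

theorem normSq_star_dotProduct {n : Type*} [Fintype n] (v w : n → ℂ) :
    (Complex.normSq (star v ⬝ᵥ w) : ℂ) = (star v ⬝ᵥ w) * (star w ⬝ᵥ v) := by
  rw [← Complex.mul_conj, ← Complex.star_def, ← star_dotProduct]

theorem sum_sum_mul_dotProduct_single_of_unit {n ι : Type*} [Fintype n] [DecidableEq n]
    [Fintype ι] {v : ι → n → ℂ} (hunit : ∀ s, star (v s) ⬝ᵥ v s = 1) (c : ι → ℂ) :
    ∑ k, ∑ s, c s * ((star (v s) ⬝ᵥ Pi.single k 1) * (Pi.single k 1 ⬝ᵥ v s)) = ∑ s, c s := by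
  rw [Finset.sum_comm]
  exact Fintype.sum_congr _ _ fun s => by
    rw [← Finset.mul_sum, sum_dotProduct_single_mul_single_dotProduct, hunit, mul_one]

def IsProjective3Design {d : ℕ} {ι : Type*} [Fintype ι] (q : ι → ℝ) (ψs : ι → Fin d → ℂ) :
    Prop :=
  ∑ s, (q s : ℂ) •
        Matrix.of (fun (i j : Fin d × Fin d × Fin d) =>
          ψs s i.1 * ψs s i.2.1 * ψs s i.2.2 *
          star (ψs s j.1) * star (ψs s j.2.1) * star (ψs s j.2.2)) =
      ((d : ℂ) * ((d : ℂ) + 1) * ((d : ℂ) + 2))⁻¹ •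
        Matrix.of (fun (i j : Fin d × Fin d × Fin d) =>
          (if i.1 = j.1 ∧ i.2.1 = j.2.1 ∧ i.2.2 = j.2.2 then (1:ℂ) else 0) +
          (if i.1 = j.1 ∧ i.2.1 = j.2.2 ∧ i.2.2 = j.2.1 then (1:ℂ) else 0) +
          (if i.1 = j.2.1 ∧ i.2.1 = j.1 ∧ i.2.2 = j.2.2 then (1:ℂ) else 0) +
          (if i.1 = j.2.1 ∧ i.2.1 = j.2.2 ∧ i.2.2 = j.1 then (1:ℂ) else 0) +
          (if i.1 = j.2.2 ∧ i.2.1 = j.1 ∧ i.2.2 = j.2.1 then (1:ℂ) else 0) +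
          (if i.1 = j.2.2 ∧ i.2.1 = j.2.1 ∧ i.2.2 = j.1 then (1:ℂ) else 0))

namespace IsProjective3Design

variable {d : ℕ} {ι : Type*} [Fintype ι] {q : ι → ℝ} {ψs : ι → Fin d → ℂ}

theorem third_moment (h : IsProjective3Design q ψs) (U V W X Y Z : Fin d → ℂ) :
    ∑ s, (q s : ℂ) * ((star U ⬝ᵥ ψs s) * (star V ⬝ᵥ ψs s) * (star W ⬝ᵥ ψs s) *
      (star (ψs s) ⬝ᵥ X) * (star (ψs s) ⬝ᵥ Y) * (star (ψs s) ⬝ᵥ Z)) =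
    ((d : ℂ) * ((d : ℂ) + 1) * ((d : ℂ) + 2))⁻¹ *
      ((star U ⬝ᵥ X) * (star V ⬝ᵥ Y) * (star W ⬝ᵥ Z) +
       (star U ⬝ᵥ X) * (star V ⬝ᵥ Z) * (star W ⬝ᵥ Y) +
       (star U ⬝ᵥ Y) * (star V ⬝ᵥ X) * (star W ⬝ᵥ Z) +
       (star U ⬝ᵥ Y) * (star V ⬝ᵥ Z) * (star W ⬝ᵥ X) +
       (star U ⬝ᵥ Z) * (star V ⬝ᵥ X) * (star W ⬝ᵥ Y) +
       (star U ⬝ᵥ Z) * (star V ⬝ᵥ Y) * (star W ⬝ᵥ X)) := by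
  set u := tensorCube (star U) (star V) (star W)
  set x := tensorCube X Y Z
  have hpair := congrArg (fun M => u ⬝ᵥ (M *ᵥ x)) h
  have hrank_one : ∀ s, Matrix.of (fun (i j : Fin d × Fin d × Fin d) =>
      ψs s i.1 * ψs s i.2.1 * ψs s i.2.2 *
        star (ψs s j.1) * star (ψs s j.2.1) * star (ψs s j.2.2)) =
      vecMulVec (tensorCube (ψs s) (ψs s) (ψs s)) (star (tensorCube (ψs s) (ψs s) (ψs s))) := by
    intro s
    ext i j
    simp only [of_apply, vecMulVec_apply, star_tensorCube, tensorCube, Pi.star_apply]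
    ring
  simp only [hrank_one, sum_mulVec, smul_mulVec, dotProduct_sum, dotProduct_smul,
    dotProduct_mulVec, vecMul_vecMulVec] at hpair
  have hperms : (u ᵥ* of fun i j =>
      (if i.1 = j.1 ∧ i.2.1 = j.2.1 ∧ i.2.2 = j.2.2 then (1:ℂ) else 0) +
      (if i.1 = j.1 ∧ i.2.1 = j.2.2 ∧ i.2.2 = j.2.1 then (1:ℂ) else 0) +
      (if i.1 = j.2.1 ∧ i.2.1 = j.1 ∧ i.2.2 = j.2.2 then (1:ℂ) else 0) +
      (if i.1 = j.2.1 ∧ i.2.1 = j.2.2 ∧ i.2.2 = j.1 then (1:ℂ) else 0) +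
      (if i.1 = j.2.2 ∧ i.2.1 = j.1 ∧ i.2.2 = j.2.1 then (1:ℂ) else 0) +
      (if i.1 = j.2.2 ∧ i.2.1 = j.2.1 ∧ i.2.2 = j.1 then (1:ℂ) else 0)) =
      tensorCube (star U) (star V) (star W) + tensorCube (star U) (star W) (star V) +
      tensorCube (star V) (star U) (star W) + tensorCube (star W) (star U) (star V) +
      tensorCube (star V) (star W) (star U) + tensorCube (star W) (star V) (star U) := by
    ext j
    simp only [vecMul, dotProduct, of_apply, mul_add, Finset.sum_add_distrib,
      sum_prod_mul_boole, Pi.add_apply, u, tensorCube]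
    ring
  simp only [hperms, add_dotProduct, smul_dotProduct, smul_eq_mul, star_tensorCube,
    tensorCube_dotProduct, u, x] at hpair
  exact (Fintype.sum_congr _ _ fun s => by ring).trans (hpair.trans (by ring))

theorem second_moment (h : IsProjective3Design q ψs)
    (hunit : ∀ s, star (ψs s) ⬝ᵥ ψs s = 1) (U V X Y : Fin d → ℂ) :
    ∑ s, (q s : ℂ) * ((star U ⬝ᵥ ψs s) * (star V ⬝ᵥ ψs s) *
      (star (ψs s) ⬝ᵥ X) * (star (ψs s) ⬝ᵥ Y)) =
    ((d : ℂ) * ((d : ℂ) + 1))⁻¹ *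
      ((star U ⬝ᵥ X) * (star V ⬝ᵥ Y) + (star U ⬝ᵥ Y) * (star V ⬝ᵥ X)) := by
  have htrace := Finset.sum_congr rfl fun k (_ : k ∈ Finset.univ) =>
    h.third_moment U V (Pi.single k 1) X Y (Pi.single k 1)
  simp only [← Pi.single_star, star_one] at htrace
  have hlhs : ∑ k, ∑ s, (q s : ℂ) * ((star U ⬝ᵥ ψs s) * (star V ⬝ᵥ ψs s) *
      (Pi.single k 1 ⬝ᵥ ψs s) * (star (ψs s) ⬝ᵥ X) * (star (ψs s) ⬝ᵥ Y) *
      (star (ψs s) ⬝ᵥ Pi.single k 1)) =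
      ∑ s, (q s : ℂ) * ((star U ⬝ᵥ ψs s) * (star V ⬝ᵥ ψs s) *
        (star (ψs s) ⬝ᵥ X) * (star (ψs s) ⬝ᵥ Y)) :=
    (Fintype.sum_congr _ _ fun k => Fintype.sum_congr _ _ fun s => by ring).trans
      (sum_sum_mul_dotProduct_single_of_unit hunit _)
  have hrhs : ∑ k : Fin d, ((star U ⬝ᵥ X) * (star V ⬝ᵥ Y) * (Pi.single k 1 ⬝ᵥ Pi.single k 1) +
      (star U ⬝ᵥ X) * (star V ⬝ᵥ Pi.single k 1) * (Pi.single k 1 ⬝ᵥ Y) +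
      (star U ⬝ᵥ Y) * (star V ⬝ᵥ X) * (Pi.single k 1 ⬝ᵥ Pi.single k 1) +
      (star U ⬝ᵥ Y) * (star V ⬝ᵥ Pi.single k 1) * (Pi.single k 1 ⬝ᵥ X) +
      (star U ⬝ᵥ Pi.single k 1) * (star V ⬝ᵥ X) * (Pi.single k 1 ⬝ᵥ Y) +
      (star U ⬝ᵥ Pi.single k 1) * (star V ⬝ᵥ Y) * (Pi.single k 1 ⬝ᵥ X)) =
      ((d : ℂ) + 2) * ((star U ⬝ᵥ X) * (star V ⬝ᵥ Y) + (star U ⬝ᵥ Y) * (star V ⬝ᵥ X)) := by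
    calc _ = ∑ k : Fin d,
          (((star U ⬝ᵥ X) * (star V ⬝ᵥ Y) + (star U ⬝ᵥ Y) * (star V ⬝ᵥ X)) *
            (Pi.single k 1 ⬝ᵥ Pi.single k 1) +
          (star U ⬝ᵥ X) * ((star V ⬝ᵥ Pi.single k 1) * (Pi.single k 1 ⬝ᵥ Y)) +
          (star U ⬝ᵥ Y) * ((star V ⬝ᵥ Pi.single k 1) * (Pi.single k 1 ⬝ᵥ X)) +
          (star V ⬝ᵥ X) * ((star U ⬝ᵥ Pi.single k 1) * (Pi.single k 1 ⬝ᵥ Y)) +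
          (star V ⬝ᵥ Y) * ((star U ⬝ᵥ Pi.single k 1) * (Pi.single k 1 ⬝ᵥ X))) :=
          Fintype.sum_congr _ _ fun k => by ring
      _ = _ := by
          simp only [Finset.sum_add_distrib, ← Finset.mul_sum,
            sum_dotProduct_single_mul_single_dotProduct]
          simp only [single_dotProduct, Pi.single_eq_same, mul_one, Finset.sum_const,
            Finset.card_univ, Fintype.card_fin, nsmul_eq_mul]
          ring
  have hd2 : (d : ℂ) + 2 ≠ 0 := by norm_cast
  rw [hlhs, ← Finset.mul_sum, hrhs, mul_inv, mul_assoc, inv_mul_cancel_left₀ hd2] at htrace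
  exact htrace

theorem first_moment (h : IsProjective3Design q ψs)
    (hunit : ∀ s, star (ψs s) ⬝ᵥ ψs s = 1) (U X : Fin d → ℂ) :
    ∑ s, (q s : ℂ) * ((star U ⬝ᵥ ψs s) * (star (ψs s) ⬝ᵥ X)) = (d : ℂ)⁻¹ * (star U ⬝ᵥ X) := by
  have htrace := Finset.sum_congr rfl fun k (_ : k ∈ Finset.univ) =>
    h.second_moment hunit U (Pi.single k 1) X (Pi.single k 1)
  simp only [← Pi.single_star, star_one] at htrace
  have hlhs : ∑ k, ∑ s, (q s : ℂ) * ((star U ⬝ᵥ ψs s) * (Pi.single k 1 ⬝ᵥ ψs s) *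
      (star (ψs s) ⬝ᵥ X) * (star (ψs s) ⬝ᵥ Pi.single k 1)) =
      ∑ s, (q s : ℂ) * ((star U ⬝ᵥ ψs s) * (star (ψs s) ⬝ᵥ X)) :=
    (Fintype.sum_congr _ _ fun k => Fintype.sum_congr _ _ fun s => by ring).trans
      (sum_sum_mul_dotProduct_single_of_unit hunit _)
  have hrhs : ∑ k : Fin d, ((star U ⬝ᵥ X) * (Pi.single k 1 ⬝ᵥ Pi.single k 1) +
      (star U ⬝ᵥ Pi.single k 1) * (Pi.single k 1 ⬝ᵥ X)) = ((d : ℂ) + 1) * (star U ⬝ᵥ X) := by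
    simp only [Finset.sum_add_distrib, ← Finset.mul_sum,
      sum_dotProduct_single_mul_single_dotProduct]
    simp only [single_dotProduct, Pi.single_eq_same, mul_one, Finset.sum_const,
      Finset.card_univ, Fintype.card_fin, nsmul_eq_mul]
    ring
  have hd1 : (d : ℂ) + 1 ≠ 0 := by norm_cast
  rw [hlhs, ← Finset.mul_sum, hrhs, mul_inv, mul_assoc, inv_mul_cancel_left₀ hd1] at htrace
  exact htrace

variable {φ ψ : Fin d → ℂ}

theorem sum_mul_normSq (h : IsProjective3Design q ψs) (hunit : ∀ s, star (ψs s) ⬝ᵥ ψs s = 1)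
    (hψ : star ψ ⬝ᵥ ψ = 1) :
    ∑ s, q s * Complex.normSq (star (ψs s) ⬝ᵥ ψ) = (d : ℝ)⁻¹ := by
  have hmoment := h.first_moment hunit ψ ψ
  rw [hψ, mul_one] at hmoment
  apply Complex.ofReal_injective
  push_cast
  rw [← hmoment]
  exact Fintype.sum_congr _ _ fun s => by rw [normSq_star_dotProduct]; ring

theorem sum_mul_normSq_mul_normSq (h : IsProjective3Design q ψs)
    (hunit : ∀ s, star (ψs s) ⬝ᵥ ψs s = 1) (hφ : star φ ⬝ᵥ φ = 1) (hψ : star ψ ⬝ᵥ ψ = 1) :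
    ∑ s, q s * (Complex.normSq (star φ ⬝ᵥ ψs s) * Complex.normSq (star (ψs s) ⬝ᵥ ψ)) =
      (1 + Complex.normSq (star φ ⬝ᵥ ψ)) / ((d : ℝ) * ((d : ℝ) + 1)) := by
  have hmoment := h.second_moment hunit φ ψ φ ψ
  rw [hφ, hψ, one_mul] at hmoment
  apply Complex.ofReal_injective
  push_cast
  rw [normSq_star_dotProduct, div_eq_inv_mul, ← hmoment]
  exact Fintype.sum_congr _ _ fun s => by simp only [normSq_star_dotProduct]; ring

theorem sum_mul_normSq_sq_mul_normSq (h : IsProjective3Design q ψs)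
    (hφ : star φ ⬝ᵥ φ = 1) (hψ : star ψ ⬝ᵥ ψ = 1) :
    ∑ s, q s * (Complex.normSq (star φ ⬝ᵥ ψs s) ^ 2 * Complex.normSq (star (ψs s) ⬝ᵥ ψ)) =
      (2 + 4 * Complex.normSq (star φ ⬝ᵥ ψ)) / ((d : ℝ) * ((d : ℝ) + 1) * ((d : ℝ) + 2)) := by
  have hmoment := h.third_moment φ φ ψ φ φ ψ
  rw [hφ, hψ] at hmoment
  apply Complex.ofReal_injective
  push_cast
  rw [normSq_star_dotProduct, div_eq_inv_mul]
  refine (Fintype.sum_congr _ _ fun s => ?_).trans (hmoment.trans (by ring))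
  simp only [normSq_star_dotProduct]
  ring

end IsProjective3Design

theorem stmt18_general {d : ℕ} (hd : 0 < d) {ι : Type*} [Fintype ι]
    (q : ι → ℝ) (ψs : ι → Fin d → ℂ)
    (hunit : ∀ s, star (ψs s) ⬝ᵥ ψs s = 1)
    (hdesign : ∑ s, (q s : ℂ) •
        Matrix.of (fun (i j : Fin d × Fin d × Fin d) =>
          ψs s i.1 * ψs s i.2.1 * ψs s i.2.2 *
          star (ψs s j.1) * star (ψs s j.2.1) * star (ψs s j.2.2)) =
      ((d : ℂ) * ((d : ℂ) + 1) * ((d : ℂ) + 2))⁻¹ •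
        Matrix.of (fun (i j : Fin d × Fin d × Fin d) =>
          (if i.1 = j.1 ∧ i.2.1 = j.2.1 ∧ i.2.2 = j.2.2 then (1:ℂ) else 0) +
          (if i.1 = j.1 ∧ i.2.1 = j.2.2 ∧ i.2.2 = j.2.1 then (1:ℂ) else 0) +
          (if i.1 = j.2.1 ∧ i.2.1 = j.1 ∧ i.2.2 = j.2.2 then (1:ℂ) else 0) +
          (if i.1 = j.2.1 ∧ i.2.1 = j.2.2 ∧ i.2.2 = j.1 then (1:ℂ) else 0) +
          (if i.1 = j.2.2 ∧ i.2.1 = j.1 ∧ i.2.2 = j.2.1 then (1:ℂ) else 0) +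
          (if i.1 = j.2.2 ∧ i.2.1 = j.2.1 ∧ i.2.2 = j.1 then (1:ℂ) else 0)))
    (ψ φ : Fin d → ℂ)
    (hψ : star ψ ⬝ᵥ ψ = 1) (hφ : star φ ⬝ᵥ φ = 1)
    (f : ℝ) (hf : f = Complex.normSq (star φ ⬝ᵥ ψ))
    (fhat : ι → ℝ)
    (hfhat : fhat = fun s => ((d : ℝ) + 1) * Complex.normSq (star φ ⬝ᵥ ψs s) - 1)
    (p : ι → ℝ)
    (hp : p = fun s => q s * d * Complex.normSq (star (ψs s) ⬝ᵥ ψ)) :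
    ∑ s, p s * fhat s = f ∧
    ∑ s, p s * (fhat s - f) ^ 2 =
      2 * ((d : ℝ) + 1) * (1 + 2 * f) / ((d : ℝ) + 2) - (1 + f) ^ 2 := by
  have h3 : IsProjective3Design q ψs := hdesign
  have m1 := h3.sum_mul_normSq hunit hψ
  have m2 := h3.sum_mul_normSq_mul_normSq hunit hφ hψ
  have m3 := h3.sum_mul_normSq_sq_mul_normSq hφ hψ
  rw [← hf] at m2 m3
  subst hfhat hp
  set a := fun s => Complex.normSq (star φ ⬝ᵥ ψs s)
  set b := fun s => Complex.normSq (star (ψs s) ⬝ᵥ ψ)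
  have hd0 : (d : ℝ) ≠ 0 := by exact_mod_cast hd.ne'
  constructor
  · calc ∑ s, q s * d * b s * ((d + 1) * a s - 1)
        = d * (d + 1) * ∑ s, q s * (a s * b s) - d * ∑ s, q s * b s := by
          rw [Finset.mul_sum, Finset.mul_sum, ← Finset.sum_sub_distrib]
          exact Fintype.sum_congr _ _ fun s => by ring
      _ = f := by rw [m1, m2]; field_simp; ring
  · calc ∑ s, q s * d * b s * ((d + 1) * a s - 1 - f) ^ 2
        = d * (d + 1) ^ 2 * ∑ s, q s * (a s ^ 2 * b s)
          - 2 * d * (d + 1) * (1 + f) * ∑ s, q s * (a s * b s)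
          + d * (1 + f) ^ 2 * ∑ s, q s * b s := by
          simp only [Finset.mul_sum, ← Finset.sum_sub_distrib, ← Finset.sum_add_distrib]
          exact Fintype.sum_congr _ _ fun s => by ring
      _ = _ := by rw [m1, m2, m3]; field_simp; ring

/-- For a complex projective 3-design `{q_s, |s⟩}` in dimension `d`, unit
vectors `|ψ⟩, |φ⟩` with `f = |⟨φ|ψ⟩|²`, and the shadow fidelity estimator
`f̂(s) = (d+1)|⟨φ|s⟩|² − 1` for outcome `s` occurring with probability
`p_s = q_s d |⟨s|ψ⟩|²`, the estimator is unbiased, `E[f̂] = f`, and its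
variance is `E[(f̂−f)²] = 2(d+1)(1+2f)/(d+2) − (1+f)²`. -/
theorem stmt18 {d : ℕ} (hd : 0 < d) {ι : Type*} [Fintype ι]
    (q : ι → ℝ) (ψs : ι → Fin d → ℂ)
    (hq : ∀ s, 0 < q s) (hsum : ∑ s, q s = 1)
    (hunit : ∀ s, star (ψs s) ⬝ᵥ ψs s = 1)
    (hdesign : ∑ s, (q s : ℂ) •
        Matrix.of (fun (i j : Fin d × Fin d × Fin d) =>
          ψs s i.1 * ψs s i.2.1 * ψs s i.2.2 *
          star (ψs s j.1) * star (ψs s j.2.1) * star (ψs s j.2.2)) =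
      ((d : ℂ) * ((d : ℂ) + 1) * ((d : ℂ) + 2))⁻¹ •
        Matrix.of (fun (i j : Fin d × Fin d × Fin d) =>
          (if i.1 = j.1 ∧ i.2.1 = j.2.1 ∧ i.2.2 = j.2.2 then (1:ℂ) else 0) +
          (if i.1 = j.1 ∧ i.2.1 = j.2.2 ∧ i.2.2 = j.2.1 then (1:ℂ) else 0) +
          (if i.1 = j.2.1 ∧ i.2.1 = j.1 ∧ i.2.2 = j.2.2 then (1:ℂ) else 0) +
          (if i.1 = j.2.1 ∧ i.2.1 = j.2.2 ∧ i.2.2 = j.1 then (1:ℂ) else 0) +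
          (if i.1 = j.2.2 ∧ i.2.1 = j.1 ∧ i.2.2 = j.2.1 then (1:ℂ) else 0) +
          (if i.1 = j.2.2 ∧ i.2.1 = j.2.1 ∧ i.2.2 = j.1 then (1:ℂ) else 0)))
    (ψ φ : Fin d → ℂ)
    (hψ : star ψ ⬝ᵥ ψ = 1) (hφ : star φ ⬝ᵥ φ = 1)
    (f : ℝ) (hf : f = Complex.normSq (star φ ⬝ᵥ ψ))
    (fhat : ι → ℝ)
    (hfhat : fhat = fun s => ((d : ℝ) + 1) * Complex.normSq (star φ ⬝ᵥ ψs s) - 1)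
    (p : ι → ℝ)
    (hp : p = fun s => q s * d * Complex.normSq (star (ψs s) ⬝ᵥ ψ)) :
    ∑ s, p s * fhat s = f ∧
    ∑ s, p s * (fhat s - f) ^ 2 =
      2 * ((d : ℝ) + 1) * (1 + 2 * f) / ((d : ℝ) + 2) - (1 + f) ^ 2 :=
  stmt18_general hd q ψs hunit hdesign ψ φ hψ hφ f hf fhat hfhat p hp
end
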